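/- arXiv:1203.3721 — 4 statements merged into one kernel-verified Lean document; each statement's English description precedes it below -/
import Mathlib

section
/- Let U, W ⊂ ℝ^m and V ⊂ ℝ^l be measurable sets and let Ψ : U × V → W be a continuous map such that for every measurable function g : W → ℝ one has ∫_V ‖g∘Ψ_z‖_{L^1(U)} dz ≤ C ‖g‖_{L^1(W)}, where Ψ_z(x) = Ψ(x,z). If u ∈ L^p(W; ℝ^ν) with 1 ≤ p < ∞ and (u_n) is a sequence of measurable functions converging to u in L^p(W; ℝ^ν), then there exists a subsequence (u_{n_i}) such that for almost every z ∈ V: (i) the sequence (u_{n_i} ∘ Ψ_z) converges in L^p(U; ℝ^ν) to a function denoted u∘Ψ_z; (ii) the essential range of u∘Ψ_z is contained in the essential range of u. -/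
/-!
Pass to a subsequence with `∑ᵢ ‖u_{nᵢ} - u‖_p^p < ∞`. The hypothesis on `Ψ`, applied to
`g = |u_{nᵢ} - u|^p` and summed over `i`, gives `∑ᵢ ‖(u_{nᵢ} - u) ∘ Ψ_z‖_p^p < ∞` for a.e. `z`, so
`u_{nᵢ} ∘ Ψ_z → u ∘ Ψ_z` in `L^p(U)`. Applied to the indicator of the null set where `u` leaves its
essential range, it shows that for a.e. `z` the map `Ψ_z` meets this set only on a null set. Here
`u` is replaced by a Borel representative, so that `u ∘ Ψ_z` is measurable.
-/

open MeasureTheory Metric Set Filter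
open scoped ENNReal Topology Pointwise

noncomputable section

/-- `ℝ^m`. -/
abbrev Euc (m : ℕ) : Type := EuclideanSpace ℝ (Fin m)

/-- The open cube `Q^m_r(a)` of center `a` and radius `r` (half of the side length). -/
def cubeO {m : ℕ} (a : Euc m) (r : ℝ) : Set (Euc m) := {x | ∀ i, |x i - a i| < r}

/-- The closed cube of center `a` and radius `r` (half of the side length). -/
def cubeC {m : ℕ} (a : Euc m) (r : ℝ) : Set (Euc m) := {x | ∀ i, |x i - a i| ≤ r}

/-- `v` is the weak (distributional) iterated derivative of order `j` of `u` on `Ω`: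
for every smooth test function `φ` compactly supported in `Ω` and all directions `d`,
`∫_Ω (D^j φ)[d] u = (-1)^j ∫_Ω φ v[d]`. -/
def IsWeakIteratedFDeriv {E F : Type*} [NormedAddCommGroup E] [NormedSpace ℝ E] [MeasureSpace E]
    [NormedAddCommGroup F] [NormedSpace ℝ F]
    (Ω : Set E) (j : ℕ) (u : E → F)
    (v : E → ContinuousMultilinearMap ℝ (fun _ : Fin j => E) F) : Prop :=
  ∀ φ : E → ℝ, ContDiff ℝ (⊤ : ℕ∞) φ → HasCompactSupport φ → tsupport φ ⊆ Ω →
    ∀ d : Fin j → E,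
      ∫ x in Ω, iteratedFDeriv ℝ j φ x d • u x
        = (-1 : ℝ) ^ j • ∫ x in Ω, φ x • v x d

/-- A map of Sobolev class `W^{k,p}(Ω; F)`: a `p`-integrable map together with a choice of its
weak derivatives up to order `k`, all of them `p`-integrable on `Ω`. -/
structure SobolevMap (E F : Type*) [NormedAddCommGroup E] [NormedSpace ℝ E] [MeasureSpace E]
    [NormedAddCommGroup F] [NormedSpace ℝ F] (k : ℕ) (p : ℝ) (Ω : Set E) where
  toFun : E → F
  deriv : (j : ℕ) → E → ContinuousMultilinearMap ℝ (fun _ : Fin j => E) F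
  memLp_toFun : MemLp toFun (ENNReal.ofReal p) (volume.restrict Ω)
  isWeakDeriv : ∀ j, 1 ≤ j → j ≤ k → IsWeakIteratedFDeriv Ω j toFun (deriv j)
  memLp_deriv : ∀ j, 1 ≤ j → j ≤ k → MemLp (deriv j) (ENNReal.ofReal p) (volume.restrict Ω)

/-- The `W^{k,p}(Ω)` distance `‖u - g‖_{L^p} + ∑_{j=1}^k ‖D^j u - D^j g‖_{L^p}` between a
Sobolev map `u` and a (smooth) map `g`, whose derivatives are taken classically. -/
def sobDistSmooth {E F : Type*} [NormedAddCommGroup E] [NormedSpace ℝ E] [MeasureSpace E]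
    [NormedAddCommGroup F] [NormedSpace ℝ F] {k : ℕ} {p : ℝ} {Ω : Set E}
    (u : SobolevMap E F k p Ω) (g : E → F) : ℝ≥0∞ :=
  eLpNorm (fun x => u.toFun x - g x) (ENNReal.ofReal p) (volume.restrict Ω)
    + ∑ j ∈ Finset.Icc 1 k,
        eLpNorm (fun x => u.deriv j x - iteratedFDeriv ℝ j g x) (ENNReal.ofReal p)
          (volume.restrict Ω)

/-- The `W^{k,p}(Ω)` distance `‖u - v‖_{L^p} + ∑_{j=1}^k ‖D^j u - D^j v‖_{L^p}` between two
Sobolev maps. -/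
def sobDist {E F : Type*} [NormedAddCommGroup E] [NormedSpace ℝ E] [MeasureSpace E]
    [NormedAddCommGroup F] [NormedSpace ℝ F] {k : ℕ} {p : ℝ} {Ω : Set E}
    (u v : SobolevMap E F k p Ω) : ℝ≥0∞ :=
  eLpNorm (fun x => u.toFun x - v.toFun x) (ENNReal.ofReal p) (volume.restrict Ω)
    + ∑ j ∈ Finset.Icc 1 k,
        eLpNorm (fun x => u.deriv j x - v.deriv j x) (ENNReal.ofReal p) (volume.restrict Ω)

/-- A sequence of (smooth) maps `un` converges to `u` strongly in `W^{k,p}(Ω)`. -/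
def TendstoSobolevSmooth {E F : Type*} [NormedAddCommGroup E] [NormedSpace ℝ E] [MeasureSpace E]
    [NormedAddCommGroup F] [NormedSpace ℝ F] {k : ℕ} {p : ℝ} {Ω : Set E}
    (un : ℕ → E → F) (u : SobolevMap E F k p Ω) : Prop :=
  Tendsto (fun n => sobDistSmooth u (un n)) atTop (𝓝 0)

/-- `v` is a composition `u ∘ Φ` in the `W^{k,p}(Ω)` sense: there is a sequence of smooth maps
converging to `u` in `W^{k,p}(Ω)` whose compositions with `Φ` converge to `v` in `W^{k,p}(Ω)`. -/
def IsSobolevComp {E F : Type*} [NormedAddCommGroup E] [NormedSpace ℝ E] [MeasureSpace E]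
    [NormedAddCommGroup F] [NormedSpace ℝ F] {k : ℕ} {p : ℝ} {Ω : Set E}
    (u : SobolevMap E F k p Ω) (Φ : E → E) (v : SobolevMap E F k p Ω) : Prop :=
  ∃ un : ℕ → E → F, (∀ i, ContDiff ℝ (⊤ : ℕ∞) (un i)) ∧
    TendstoSobolevSmooth un u ∧ TendstoSobolevSmooth (fun i x => un i (Φ x)) v

/-- `N` is a smooth `n`-dimensional submanifold of `ℝ^ν`: around each of its points, `N` can be
smoothly straightened onto the subspace of `ℝ^ν` spanned by the first `n` coordinates. -/
def IsSmoothSubmanifold {ν : ℕ} (n : ℕ) (N : Set (Euc ν)) : Prop :=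
  ∀ x ∈ N, ∃ (U V : Set (Euc ν)) (φ ψ : Euc ν → Euc ν),
    IsOpen U ∧ IsOpen V ∧ x ∈ U ∧
    ContDiffOn ℝ (⊤ : ℕ∞) φ U ∧ ContDiffOn ℝ (⊤ : ℕ∞) ψ V ∧
    MapsTo φ U V ∧ MapsTo ψ V U ∧
    (∀ y ∈ U, ψ (φ y) = y) ∧ (∀ y ∈ V, φ (ψ y) = y) ∧
    (∀ y ∈ U, (y ∈ N ↔ ∀ i : Fin ν, n ≤ (i : ℕ) → φ y i = 0))

/-- The homotopy group `π_ℓ(N)` is trivial: every continuous map from the sphere `S^ℓ` with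
values in `N` has a continuous extension to the closed unit ball `B^{ℓ+1}` with values in `N`. -/
def PiTrivial (ℓ : ℕ) {ν : ℕ} (N : Set (Euc ν)) : Prop :=
  ∀ f : Euc (ℓ + 1) → Euc ν,
    ContinuousOn f (sphere (0 : Euc (ℓ + 1)) 1) → MapsTo f (sphere (0 : Euc (ℓ + 1)) 1) N →
    ∃ F : Euc (ℓ + 1) → Euc ν,
      ContinuousOn F (closedBall (0 : Euc (ℓ + 1)) 1) ∧
      MapsTo F (closedBall (0 : Euc (ℓ + 1)) 1) N ∧
      EqOn F f (sphere (0 : Euc (ℓ + 1)) 1)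

/-- The essential range of `f` with respect to the measure `μ`: the set of points all of whose
neighborhoods are hit by `f` on a set of positive measure. -/
def essRange {α : Type*} [MeasurableSpace α] (μ : Measure α) {E : Type*} [TopologicalSpace E]
    (f : α → E) : Set E :=
  {y | ∀ U : Set E, IsOpen U → y ∈ U → 0 < μ (f ⁻¹' U)}

open scoped NNReal

section EssRange

variable {α E : Type*} [MeasurableSpace α] {μ : Measure α} [TopologicalSpace E]

theorem isClosed_essRange (f : α → E) : IsClosed (essRange μ f) := by
  refine isClosed_of_closure_subset fun y hy O hO hyO => ?_
  obtain ⟨y', hy'O, hy'⟩ := mem_closure_iff.mp hy O hO hyO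
  exact hy' O hO hy'O

theorem essRange_congr_ae {f g : α → E} (h : f =ᵐ[μ] g) : essRange μ f = essRange μ g := by
  ext y
  simp only [essRange, mem_ofPred_eq, measure_congr (h.preimage _)]

theorem essRange_subset_of_ae_mem {f : α → E} {F : Set E} (hF : IsClosed F)
    (h : ∀ᵐ x ∂μ, f x ∈ F) : essRange μ f ⊆ F := by
  intro y hy
  by_contra hyF
  exact (hy Fᶜ hF.isOpen_compl hyF).ne' (ae_iff.mp h)

theorem ae_mem_essRange [SecondCountableTopology E] (f : α → E) :
    ∀ᵐ x ∂μ, f x ∈ essRange μ f := by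
  set B := TopologicalSpace.countableBasis E
  have hcover : (essRange μ f)ᶜ ⊆ ⋃ b ∈ {b ∈ B | μ (f ⁻¹' b) = 0}, b := by
    intro y hy
    simp only [mem_compl_iff, essRange, mem_ofPred_eq, not_forall, not_lt,
      nonpos_iff_eq_zero] at hy
    obtain ⟨O, hO, hyO, hμO⟩ := hy
    obtain ⟨b, hbB, hyb, hbO⟩ :=
      (TopologicalSpace.isBasis_countableBasis E).exists_subset_of_mem_open hyO hO
    exact mem_biUnion ⟨hbB, measure_mono_null (preimage_mono hbO) hμO⟩ hyb
  refine ae_iff.mpr (measure_mono_null (preimage_mono hcover) ?_)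
  rw [preimage_iUnion₂]
  exact (measure_biUnion_null_iff <| (TopologicalSpace.countable_countableBasis E).mono
    (sep_subset _ _)).mpr fun b hb => hb.2

end EssRange

theorem ENNReal.exists_strictMono_tsum_ne_top {f : ℕ → ℝ≥0∞} (hf : Tendsto f atTop (𝓝 0)) :
    ∃ φ : ℕ → ℕ, StrictMono φ ∧ ∑' i, f (φ i) ≠ ∞ := by
  obtain ⟨φ, hφ, hle⟩ := extraction_forall_of_eventually fun i =>
    hf.eventually (eventually_le_nhds (ENNReal.pow_pos (by norm_num : (0 : ℝ≥0∞) < 2⁻¹) i))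
  refine ⟨φ, hφ, ne_top_of_le_ne_top ?_ (ENNReal.tsum_le_tsum hle)⟩
  rw [ENNReal.tsum_geometric, ENNReal.one_sub_inv_two, inv_inv]
  exact ENNReal.ofNat_ne_top

theorem tendsto_eLpNorm_zero_iff {α E ι : Type*} [MeasurableSpace α] {μ : Measure α}
    [NormedAddCommGroup E] {l : Filter ι} {f : ι → α → E} {p : ℝ≥0∞} (hp0 : p ≠ 0)
    (hp : p ≠ ∞) :
    Tendsto (fun i => eLpNorm (f i) p μ) l (𝓝 0) ↔
      Tendsto (fun i => ∫⁻ x, ‖f i x‖ₑ ^ p.toReal ∂μ) l (𝓝 0) := by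
  have hpos : 0 < p.toReal := ENNReal.toReal_pos hp0 hp
  have hpow : ∀ r : ℝ, 0 < r → Tendsto (fun t : ℝ≥0∞ => t ^ r) (𝓝 0) (𝓝 0) := fun r hr => by
    simpa [ENNReal.zero_rpow_of_pos hr] using (ENNReal.continuous_rpow_const (y := r)).tendsto 0
  simp_rw [eLpNorm_eq_lintegral_rpow_enorm_toReal hp0 hp]
  refine ⟨fun h => ?_, fun h => (hpow _ (one_div_pos.mpr hpos)).comp h⟩
  convert (hpow _ hpos).comp h using 2 with i
  rw [Function.comp_apply, ← ENNReal.rpow_mul, one_div_mul_cancel hpos.ne', ENNReal.rpow_one]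

section TransferBound

variable {X Y Z : Type*} [MeasurableSpace X] [MeasurableSpace Y] [MeasurableSpace Z]
  {μ : Measure X} {ν : Measure Z} {ρ : Measure Y} {Ψ : X × Z → Y} {c : ℝ≥0∞}

def LintegralCompBound (μ : Measure X) (ν : Measure Z) (ρ : Measure Y) (Ψ : X × Z → Y)
    (c : ℝ≥0∞) : Prop :=
  ∀ g : Y → ℝ≥0, Measurable g →
    ∫⁻ z, ∫⁻ x, (g (Ψ (x, z)) : ℝ≥0∞) ∂μ ∂ν ≤ c * ∫⁻ y, (g y : ℝ≥0∞) ∂ρ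

theorem ae_ae_comp_notMem_of_measure_zero [SFinite μ] (hΨm : Measurable Ψ)
    (hΨ : LintegralCompBound μ ν ρ Ψ c)
    {N : Set Y} (hN : MeasurableSet N) (hρN : ρ N = 0) :
    ∀ᵐ z ∂ν, ∀ᵐ x ∂μ, Ψ (x, z) ∉ N := by
  have hind : Measurable fun q : X × Z => N.indicator (1 : Y → ℝ≥0∞) (Ψ q) :=
    (measurable_one.indicator hN).comp hΨm
  have hzero : ∫⁻ z, ∫⁻ x, N.indicator 1 (Ψ (x, z)) ∂μ ∂ν = 0 := by
    have h := hΨ (N.indicator 1) (measurable_one.indicator hN)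
    simp only [ENNReal.coe_indicator, Pi.one_apply, ENNReal.coe_one] at h
    rw [← Pi.one_def, lintegral_indicator_one hN, hρN, mul_zero] at h
    exact nonpos_iff_eq_zero.mp h
  filter_upwards [(lintegral_eq_zero_iff hind.lintegral_prod_left').mp hzero] with z hz
  filter_upwards [(lintegral_eq_zero_iff (hind.comp measurable_prodMk_right)).mp hz] with x hx
  simpa using hx

theorem ae_tendsto_lintegral_comp_zero [SFinite μ] (hΨm : Measurable Ψ)
    (hΨ : LintegralCompBound μ ν ρ Ψ c)
    (hc : c ≠ ∞) {g : ℕ → Y → ℝ≥0} (hg : ∀ i, Measurable (g i))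
    (hsum : ∑' i, ∫⁻ y, (g i y : ℝ≥0∞) ∂ρ ≠ ∞) :
    ∀ᵐ z ∂ν, Tendsto (fun i => ∫⁻ x, (g i (Ψ (x, z)) : ℝ≥0∞) ∂μ) atTop (𝓝 0) := by
  have hF : ∀ i, Measurable fun z => ∫⁻ x, (g i (Ψ (x, z)) : ℝ≥0∞) ∂μ := fun i =>
    ((hg i).coe_nnreal_ennreal.comp hΨm).lintegral_prod_left'
  have hfin : ∫⁻ z, ∑' i, ∫⁻ x, (g i (Ψ (x, z)) : ℝ≥0∞) ∂μ ∂ν ≠ ∞ := by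
    rw [lintegral_tsum fun i => (hF i).aemeasurable]
    refine ne_top_of_le_ne_top ?_ (ENNReal.tsum_le_tsum fun i => hΨ (g i) (hg i))
    rw [ENNReal.tsum_mul_left]
    exact ENNReal.mul_ne_top hc hsum
  filter_upwards [ae_lt_top (Measurable.tsum hF) hfin] with z hz
  exact ENNReal.tendsto_atTop_zero_of_tsum_ne_top hz.ne

theorem lintegralCompBound_restrict_of_eqOn {U : Set X} {V : Set Z} (hU : MeasurableSet U)
    (hV : MeasurableSet V) {Ψ' : X × Z → Y} (hΨ' : EqOn Ψ' Ψ (U ×ˢ V))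
    (hΨ : ∀ g : Y → ℝ, Measurable g →
      ∫⁻ z in V, ∫⁻ x in U, (‖g (Ψ (x, z))‖₊ : ℝ≥0∞) ∂μ ∂ν ≤
        c * ∫⁻ y, (‖g y‖₊ : ℝ≥0∞) ∂ρ) :
    LintegralCompBound (μ.restrict U) (ν.restrict V) ρ Ψ' c := by
  intro g hg
  have h := hΨ (fun y => g y) hg.coe_nnreal_real
  simp only [NNReal.nnnorm_eq] at h
  refine le_of_eq_of_le (setLIntegral_congr_fun hV fun z hz => ?_) h
  exact setLIntegral_congr_fun hU fun x hx => by rw [hΨ' ⟨hx, hz⟩]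

theorem ae_tendsto_eLpNorm_comp_zero [SFinite μ] {E : Type*} [NormedAddCommGroup E]
    [MeasurableSpace E] [OpensMeasurableSpace E] (hΨm : Measurable Ψ)
    (hΨ : LintegralCompBound μ ν ρ Ψ c) (hc : c ≠ ∞) {p : ℝ≥0∞} (hp0 : p ≠ 0) (hp : p ≠ ∞)
    {f : ℕ → Y → E} (hf : ∀ i, Measurable (f i))
    (hsum : ∑' i, ∫⁻ y, ‖f i y‖ₑ ^ p.toReal ∂ρ ≠ ∞) :
    ∀ᵐ z ∂ν, Tendsto (fun i => eLpNorm (fun x => f i (Ψ (x, z))) p μ) atTop (𝓝 0) := by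
  have hcoe : ∀ i y, ((‖f i y‖₊ ^ p.toReal : ℝ≥0) : ℝ≥0∞) = ‖f i y‖ₑ ^ p.toReal :=
    fun i y => ENNReal.coe_rpow_of_nonneg _ ENNReal.toReal_nonneg
  have h := ae_tendsto_lintegral_comp_zero hΨm hΨ hc
    (fun i => (hf i).nnnorm.pow_const p.toReal) (by simpa only [hcoe] using hsum)
  filter_upwards [h] with z hz
  rw [tendsto_eLpNorm_zero_iff hp0 hp]
  simpa only [hcoe] using hz

end TransferBound

theorem composition_Lp_limit_general
    (m l ν : ℕ) (p : ℝ) (hp : 1 ≤ p)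
    (U W : Set (Euc m)) (V : Set (Euc l))
    (hU : MeasurableSet U) (hV : MeasurableSet V)
    (Ψ : Euc m × Euc l → Euc m)
    (hΨc : ContinuousOn Ψ (U ×ˢ V))
    (C : ℝ)
    (hΨint : ∀ g : Euc m → ℝ, Measurable g →
      ∫⁻ z in V, ∫⁻ x in U, (‖g (Ψ (x, z))‖₊ : ℝ≥0∞)
        ≤ ENNReal.ofReal C * ∫⁻ x in W, (‖g x‖₊ : ℝ≥0∞))
    (u : Euc m → Euc ν)
    (hu : MemLp u (ENNReal.ofReal p) (volume.restrict W))
    (un : ℕ → Euc m → Euc ν) (hun : ∀ n, Measurable (un n))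
    (hconv : Tendsto
      (fun n => eLpNorm (fun x => un n x - u x) (ENNReal.ofReal p) (volume.restrict W))
      atTop (𝓝 0)) :
    ∃ φ : ℕ → ℕ, StrictMono φ ∧
      ∃ w : Euc l → Euc m → Euc ν,
        ∀ᵐ z ∂(volume.restrict V),
          Tendsto (fun i => eLpNorm (fun x => un (φ i) (Ψ (x, z)) - w z x)
              (ENNReal.ofReal p) (volume.restrict U)) atTop (𝓝 0) ∧
          essRange (volume.restrict U) (w z) ⊆ essRange (volume.restrict W) u := by
  classical
  have hq0 : ENNReal.ofReal p ≠ 0 := (ENNReal.ofReal_pos.mpr (zero_lt_one.trans_le hp)).ne'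
  -- `Ψ` is only continuous on `U × V`; extending it by `0` makes it measurable.
  set Ψ' := (U ×ˢ V).piecewise Ψ fun _ => 0
  have hΨ'm : Measurable Ψ' := hΨc.measurable_piecewise continuousOn_const (hU.prod hV)
  have hΨ' : EqOn Ψ' Ψ (U ×ˢ V) := piecewise_eqOn _ _ _
  have hbound := lintegralCompBound_restrict_of_eqOn hU hV hΨ' hΨint
  set v := hu.1.mk u
  have hvm : Measurable v := hu.1.stronglyMeasurable_mk.measurable
  have huv : u =ᵐ[volume.restrict W] v := hu.1.ae_eq_mk
  have hlim : Tendsto (fun n => eLpNorm (fun y => un n y - v y) (ENNReal.ofReal p)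
      (volume.restrict W)) atTop (𝓝 0) :=
    hconv.congr fun n => eLpNorm_congr_ae (huv.mono fun y hy => by rw [hy])
  obtain ⟨φ, hφ, hsum⟩ := ENNReal.exists_strictMono_tsum_ne_top
    ((tendsto_eLpNorm_zero_iff hq0 ENNReal.ofReal_ne_top).mp hlim)
  have hslices := ae_tendsto_eLpNorm_comp_zero hΨ'm hbound ENNReal.ofReal_ne_top hq0
    ENNReal.ofReal_ne_top (fun i => (hun (φ i)).sub hvm) hsum
  have hnull := ae_ae_comp_notMem_of_measure_zero hΨ'm hbound
    (hvm (isClosed_essRange v).isOpen_compl.measurableSet) (ae_iff.mp (ae_mem_essRange v))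
  refine ⟨φ, hφ, fun z x => v (Ψ' (x, z)), ?_⟩
  filter_upwards [ae_restrict_mem hV, hslices, hnull] with z hz hzconv hznull
  refine ⟨hzconv.congr fun i => eLpNorm_congr_ae ?_, ?_⟩
  · filter_upwards [ae_restrict_mem hU] with x hx
    rw [hΨ' ⟨hx, hz⟩, Pi.sub_apply]
  · rw [essRange_congr_ae huv]
    exact essRange_subset_of_ae_mem (isClosed_essRange v) (hznull.mono fun x hx => not_not.mp hx)

/-- let `Ψ : U × V → W` be continuous with
`∫_V ‖g ∘ Ψ_z‖_{L^1(U)} dz ≤ C ‖g‖_{L^1(W)}` for every measurable `g`. If `u_n → u` in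
`L^p(W; ℝ^ν)`, then along a subsequence, for a.e. `z ∈ V` the maps `u_{n_i} ∘ Ψ_z` converge in
`L^p(U; ℝ^ν)` to a map `u ∘ Ψ_z` whose essential range is contained in the essential range
of `u`. -/
theorem composition_Lp_limit
    (m l ν : ℕ) (p : ℝ) (hp : 1 ≤ p)
    (U W : Set (Euc m)) (V : Set (Euc l))
    (hU : MeasurableSet U) (hV : MeasurableSet V) (hW : MeasurableSet W)
    (Ψ : Euc m × Euc l → Euc m)
    (hΨc : ContinuousOn Ψ (U ×ˢ V))
    (hΨw : ∀ x ∈ U, ∀ z ∈ V, Ψ (x, z) ∈ W)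
    (C : ℝ)
    (hΨint : ∀ g : Euc m → ℝ, Measurable g →
      ∫⁻ z in V, ∫⁻ x in U, (‖g (Ψ (x, z))‖₊ : ℝ≥0∞)
        ≤ ENNReal.ofReal C * ∫⁻ x in W, (‖g x‖₊ : ℝ≥0∞))
    (u : Euc m → Euc ν)
    (hu : MemLp u (ENNReal.ofReal p) (volume.restrict W))
    (un : ℕ → Euc m → Euc ν) (hun : ∀ n, Measurable (un n))
    (hconv : Tendsto
      (fun n => eLpNorm (fun x => un n x - u x) (ENNReal.ofReal p) (volume.restrict W))
      atTop (𝓝 0)) :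
    ∃ φ : ℕ → ℕ, StrictMono φ ∧
      ∃ w : Euc l → Euc m → Euc ν,
        ∀ᵐ z ∂(volume.restrict V),
          Tendsto (fun i => eLpNorm (fun x => un (φ i) (Ψ (x, z)) - w z x)
              (ENNReal.ofReal p) (volume.restrict U)) atTop (𝓝 0) ∧
          essRange (volume.restrict U) (w z) ⊆ essRange (volume.restrict W) u :=
  composition_Lp_limit_general m l ν p hp U W V hU hV Ψ hΨc C hΨint u hu un hun hconv
end
end

section
/- Let U, V, W ⊂ ℝ^l be measurable sets and let ζ : U + V → ℝ^l be a continuous map such that for every x ∈ U and every z ∈ V one has ζ(x+z) − z ∈ W. Then, for every measurable function g : W → ℝ, ∫_V ( ∫_U |g(ζ(x+z) − z)| dx ) dz ≤ |U+V| ∫_W |g(x)| dx. -/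
open MeasureTheory Metric Set Filter
open scoped ENNReal Topology Pointwise

noncomputable section

/-! Extend `|g|` by zero outside `W` to a function `H` on all of `ℝ^l`. Substituting `y = x + z`
turns the left-hand side into the integral of `H (ζ y - z)` over the pairs `(z, y)` with `z ∈ V`
and `y - z ∈ U`. After Tonelli, for each fixed `y` (necessarily in `U + V`) the inner integral in
`z` is at most `∫ H (ζ y - z) dz = ∫ H`, by translation and reflection invariance of Lebesgue
measure; integrating over `y ∈ U + V` gives the factor `|U + V|`. -/

namespace MeasureTheory

section

variable {G : Type*} [AddCommGroup G] {A B : Set G}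

/-- The image of `B × A` under the shear `(z, x) ↦ (z, x + z)`. -/
def shearSet (A B : Set G) : Set (G × G) := {p | p.1 ∈ B ∧ p.2 - p.1 ∈ A}

theorem snd_mem_add_of_mem_shearSet {p : G × G} (hp : p ∈ shearSet A B) : p.2 ∈ A + B := by
  simpa using add_mem_add hp.2 hp.1

variable [MeasurableSpace G] {μ : Measure G}

theorem measurableSet_shearSet [MeasurableSub₂ G] (hA : MeasurableSet A) (hB : MeasurableSet B) :
    MeasurableSet (shearSet A B) :=
  (measurable_fst hB).inter ((measurable_snd.sub measurable_fst) hA)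

theorem setLIntegral_comp_add_eq_lintegral_shearSet_indicator [MeasurableAdd G]
    [μ.IsAddRightInvariant] (hA : MeasurableSet A) (H : G → ℝ≥0∞) (ψ : G → G) {z : G}
    (hz : z ∈ B) :
    ∫⁻ x in A, H (ψ (x + z) - z) ∂μ
      = ∫⁻ y, (shearSet A B).indicator (fun p => H (ψ p.2 - p.1)) (z, y) ∂μ := by
  rw [← lintegral_indicator hA, ← lintegral_sub_right_eq_self _ z]
  refine lintegral_congr fun y => ?_
  by_cases hy : y - z ∈ A
  · simp [shearSet, hy, hz]
  · simp [shearSet, hy]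

theorem lintegral_shearSet_indicator_le [MeasurableAdd G] [MeasurableNeg G]
    [μ.IsAddLeftInvariant] [μ.IsNegInvariant] (H : G → ℝ≥0∞) (ψ : G → G) (y : G) :
    ∫⁻ z, (shearSet A B).indicator (fun p => H (ψ p.2 - p.1)) (z, y) ∂μ
      ≤ (A + B).indicator (fun _ => ∫⁻ w, H w ∂μ) y := by
  by_cases hy : y ∈ A + B
  · rw [indicator_of_mem hy, ← lintegral_sub_left_eq_self H (ψ y)]
    exact lintegral_mono fun z => indicator_le_self _ _ (z, y)
  · have hzero : ∀ z, (shearSet A B).indicator (fun p => H (ψ p.2 - p.1)) (z, y) = 0 :=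
      fun z => indicator_of_notMem (fun hp => hy (snd_mem_add_of_mem_shearSet hp)) _
    simp [hy, hzero]

variable [TopologicalSpace G] [IsTopologicalAddGroup G] [SecondCountableTopology G]
  [BorelSpace G]

theorem aemeasurable_shearSet_indicator (hA : MeasurableSet A) (hB : MeasurableSet B)
    {H : G → ℝ≥0∞} (hH : Measurable H) {ψ : G → G} (hψ : ContinuousOn ψ (A + B)) :
    AEMeasurable ((shearSet A B).indicator fun p => H (ψ p.2 - p.1)) (μ.prod μ) := by
  have hS := measurableSet_shearSet hA hB
  rw [aemeasurable_indicator_iff hS]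
  have hcont : ContinuousOn (fun p : G × G => ψ p.2 - p.1) (shearSet A B) :=
    (hψ.comp continuous_snd.continuousOn fun _ => snd_mem_add_of_mem_shearSet).sub
      continuous_fst.continuousOn
  exact hH.comp_aemeasurable (hcont.aemeasurable hS)

theorem setLIntegral_setLIntegral_comp_add_sub_le [SFinite μ] [μ.IsAddLeftInvariant]
    [μ.IsNegInvariant] (hA : MeasurableSet A) (hB : MeasurableSet B) {H : G → ℝ≥0∞}
    (hH : Measurable H) {ψ : G → G} (hψ : ContinuousOn ψ (A + B)) :
    ∫⁻ z in B, ∫⁻ x in A, H (ψ (x + z) - z) ∂μ ∂μ ≤ μ (A + B) * ∫⁻ w, H w ∂μ := by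
  set F := (shearSet A B).indicator fun p => H (ψ p.2 - p.1)
  calc ∫⁻ z in B, ∫⁻ x in A, H (ψ (x + z) - z) ∂μ ∂μ
      = ∫⁻ z in B, ∫⁻ y, F (z, y) ∂μ ∂μ :=
        setLIntegral_congr_fun hB fun z hz =>
          setLIntegral_comp_add_eq_lintegral_shearSet_indicator hA H ψ hz
    _ ≤ ∫⁻ z, ∫⁻ y, F (z, y) ∂μ ∂μ := setLIntegral_le_lintegral _ _
    _ = ∫⁻ y, ∫⁻ z, F (z, y) ∂μ ∂μ :=
        lintegral_lintegral_swap (aemeasurable_shearSet_indicator hA hB hH hψ)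
    _ ≤ ∫⁻ y, (A + B).indicator (fun _ => ∫⁻ w, H w ∂μ) y ∂μ :=
        lintegral_mono (lintegral_shearSet_indicator_le H ψ)
    _ ≤ (∫⁻ w, H w ∂μ) * μ (A + B) := lintegral_indicator_const_le _ _
    _ = μ (A + B) * ∫⁻ w, H w ∂μ := mul_comm _ _

end

end MeasureTheory

theorem translation_change_of_variables_estimate_general
    (l : ℕ) (U V W : Set (Euc l))
    (hU : MeasurableSet U) (hV : MeasurableSet V)
    (ζ : Euc l → Euc l) (hζ : ContinuousOn ζ (U + V))
    (hmap : ∀ x ∈ U, ∀ z ∈ V, ζ (x + z) - z ∈ W)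
    (g : Euc l → ℝ) (hg : Measurable g) :
    ∫⁻ z in V, ∫⁻ x in U, ENNReal.ofReal |g (ζ (x + z) - z)|
      ≤ volume (U + V) * ∫⁻ x in W, ENNReal.ofReal |g x| := by
  -- `W` need not be measurable; its measurable hull has the same restricted measure.
  set H := (toMeasurable volume W).indicator fun w => ENNReal.ofReal |g w|
  have hH : Measurable H := hg.abs.ennreal_ofReal.indicator (measurableSet_toMeasurable _ _)
  have hgH : ∀ z ∈ V, ∀ x ∈ U, ENNReal.ofReal |g (ζ (x + z) - z)| = H (ζ (x + z) - z) :=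
    fun z hz x hx => (indicator_of_mem (subset_toMeasurable volume W (hmap x hx z hz))
      fun w => ENNReal.ofReal |g w|).symm
  calc ∫⁻ z in V, ∫⁻ x in U, ENNReal.ofReal |g (ζ (x + z) - z)|
      = ∫⁻ z in V, ∫⁻ x in U, H (ζ (x + z) - z) :=
        setLIntegral_congr_fun hV fun z hz => setLIntegral_congr_fun hU (hgH z hz)
    _ ≤ volume (U + V) * ∫⁻ w, H w := setLIntegral_setLIntegral_comp_add_sub_le hU hV hH hζ
    _ = volume (U + V) * ∫⁻ x in W, ENNReal.ofReal |g x| := by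
        rw [lintegral_indicator (measurableSet_toMeasurable _ _),
          Measure.restrict_toMeasurable_of_sFinite]

/-- if `ζ : U + V → ℝ^l` is continuous and `ζ(x+z) - z ∈ W` for all `x ∈ U`,
`z ∈ V`, then for every measurable `g : W → ℝ`,
`∫_V ∫_U |g(ζ(x+z) - z)| dx dz ≤ |U + V| ∫_W |g|`. -/
theorem translation_change_of_variables_estimate
    (l : ℕ) (U V W : Set (Euc l))
    (hU : MeasurableSet U) (hV : MeasurableSet V) (hW : MeasurableSet W)
    (ζ : Euc l → Euc l) (hζ : ContinuousOn ζ (U + V))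
    (hmap : ∀ x ∈ U, ∀ z ∈ V, ζ (x + z) - z ∈ W)
    (g : Euc l → ℝ) (hg : Measurable g) :
    ∫⁻ z in V, ∫⁻ x in U, ENNReal.ofReal |g (ζ (x + z) - z)|
      ≤ volume (U + V) * ∫⁻ x in W, ENNReal.ofReal |g x| :=
  translation_change_of_variables_estimate_general l U V W hU hV ζ hζ hmap g hg
end
end

section
/- Let Ω ⊂ ℝ^m be open, φ ∈ C_c^∞(B_1^m) a mollifier, and ψ ∈ C^∞(Ω) a nonnegative function with ‖Dψ‖_{L^∞(Ω)} < 1. Then for every u ∈ L^p(Ω; ℝ^ν) with 1 ≤ p < ∞ and every open set ω ⊂ {x ∈ Ω : dist(x, ∂Ω) ≥ ψ(x)}, one has φ_ψ ∗ u ∈ L^p(ω; ℝ^ν), with ‖φ_ψ ∗ u‖_{L^p(ω)} ≤ (1 − ‖Dψ‖_{L^∞(ω)})^{−1/p} ‖u‖_{L^p(Ω)}, and ‖φ_ψ ∗ u − u‖_{L^p(ω)} ≤ sup_{v ∈ B_1^m} ‖τ_{ψv}u − u‖_{L^p(ω)}. -/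
open MeasureTheory Metric Set Filter
open scoped ENNReal Topology Pointwise

noncomputable section

/-- The convolution `φ_ψ ∗ u` of `u` with the mollifier `φ` at the variable scale `ψ`:
`(φ_ψ ∗ u)(x) = ∫_{B_1} φ(z) u(x + ψ(x) z) dz`. -/
def mollifyVar {m ν : ℕ} (φ ψ : Euc m → ℝ) (u : Euc m → Euc ν) (x : Euc m) : Euc ν :=
  ∫ z in ball (0 : Euc m) 1, φ z • u (x + ψ x • z)

/-!
For `z ∈ B_1` the map `T_z x = x + ψ(x) z` sends `ω` into `Ω`, is injective on `ω` (on each ball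
`B(y, ψ y) ⊆ Ω` the function `ψ` is `L`-Lipschitz, and `L ‖z‖ < 1`), and has Jacobian
`1 + Dψ(x) z ≥ 1 - ‖Dψ‖_{L^∞(ω)}`. By the change of variables formula, `T_z` therefore pushes
Lebesgue measure on `ω` forward to at most `(1 - ‖Dψ‖_{L^∞(ω)})⁻¹` times Lebesgue measure on `Ω`.
Since `φ_ψ ∗ u (x)` is the average of `u (T_z x)` against the probability measure `φ(z) dz`,
Jensen's inequality and Tonelli's theorem bound `‖φ_ψ ∗ u‖_p^p` by the average over `z` of
`‖u ∘ T_z‖_p^p`, and `‖φ_ψ ∗ u - u‖_p^p` by the average of `‖u ∘ T_z - u‖_p^p`.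
-/

open Function

theorem eLpNorm_ofReal_rpow_eq_lintegral {α F : Type*} [MeasurableSpace α] [NormedAddCommGroup F]
    {μ : Measure α} {p : ℝ} (hp : 0 < p) (f : α → F) :
    eLpNorm f (ENNReal.ofReal p) μ ^ p = ∫⁻ x, ‖f x‖ₑ ^ p ∂μ := by
  have := eLpNorm_nnreal_pow_eq_lintegral (μ := μ) (f := f) (p := p.toNNReal) (by simpa using hp)
  rwa [Real.coe_toNNReal _ hp.le] at this

section Transport

variable {α β F : Type*} [MeasurableSpace α] [MeasurableSpace β] [NormedAddCommGroup F]
  {μ ρ : Measure α} {ν : Measure β} {C : ℝ≥0∞}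

theorem eLpNorm_comp_le_of_map_le {S : α → α} (hS : AEMeasurable S μ) (hmap : μ.map S ≤ C • ρ)
    {f : α → F} (hf : AEStronglyMeasurable f ρ) {q : ℝ≥0∞} (hq : q ≠ ∞) :
    eLpNorm (f ∘ S) q μ ≤ C ^ (1 / q).toReal * eLpNorm f q ρ := by
  rw [← eLpNorm_map_measure (hf.mono_ac (Measure.absolutelyContinuous_of_le_smul hmap)) hS,
    ← smul_eq_mul, ← eLpNorm_smul_measure_of_ne_top hq]
  exact eLpNorm_mono_measure f hmap

theorem quasiMeasurePreserving_uncurry_of_map_le [SFinite μ] [SFinite ν] {T : α → β → α}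
    (hT : Measurable (uncurry T)) (hmap : ∀ᵐ z ∂ν, μ.map (T · z) ≤ C • ρ) :
    Measure.QuasiMeasurePreserving (uncurry T) (μ.prod ν) ρ := by
  refine ⟨hT, Measure.AbsolutelyContinuous.mk fun N hN hρN => ?_⟩
  rw [Measure.map_apply hT hN, Measure.prod_apply_symm (hT hN)]
  refine (lintegral_congr_ae (hmap.mono fun z hz => ?_)).trans lintegral_zero
  have hTz : Measurable (T · z) := hT.comp measurable_prodMk_right
  refine le_antisymm ?_ bot_le
  calc μ ((T · z) ⁻¹' N) = μ.map (T · z) N := (Measure.map_apply hTz hN).symm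
    _ ≤ C * ρ N := hz N
    _ = 0 := by rw [hρN, mul_zero]

theorem ae_eLpNorm_comp_le_of_map_le {T : α → β → α} (hT : Measurable (uncurry T))
    (hmap : ∀ᵐ z ∂ν, μ.map (T · z) ≤ C • ρ) {f : α → F} (hf : AEStronglyMeasurable f ρ) {p : ℝ}
    (hp : 0 < p) :
    ∀ᵐ z ∂ν, eLpNorm (fun x => f (T x z)) (ENNReal.ofReal p) μ
      ≤ C ^ (1 / p) * eLpNorm f (ENNReal.ofReal p) ρ := by
  filter_upwards [hmap] with z hz
  have := eLpNorm_comp_le_of_map_le (hT.comp measurable_prodMk_right).aemeasurable hz hf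
    (q := ENNReal.ofReal p) ENNReal.ofReal_ne_top
  rwa [one_div, ENNReal.toReal_inv, ENNReal.toReal_ofReal hp.le, ← one_div] at this

end Transport

section ProbabilityAverage

variable {α β F : Type*} [MeasurableSpace α] [MeasurableSpace β] [NormedAddCommGroup F]
  {μ : Measure α} {ν : Measure β} [IsProbabilityMeasure ν] {p : ℝ}

theorem enorm_integral_rpow_le_lintegral [NormedSpace ℝ F] (hp : 1 ≤ p) (g : β → F) :
    ‖∫ z, g z ∂ν‖ₑ ^ p ≤ ∫⁻ z, ‖g z‖ₑ ^ p ∂ν := by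
  have hp0 : 0 < p := zero_lt_one.trans_le hp
  by_cases hg : AEStronglyMeasurable g ν
  · rw [← eLpNorm_ofReal_rpow_eq_lintegral hp0]
    gcongr
    calc ‖∫ z, g z ∂ν‖ₑ ≤ eLpNorm g 1 ν := by
          rw [eLpNorm_one_eq_lintegral_enorm]; exact enorm_integral_le_lintegral_enorm g
      _ ≤ eLpNorm g (ENNReal.ofReal p) ν :=
          eLpNorm_le_eLpNorm_of_exponent_le (by simpa using hp) hg
  · rw [integral_undef fun h => hg h.aestronglyMeasurable, enorm_zero,
      ENNReal.zero_rpow_of_pos hp0]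
    exact bot_le

variable [SFinite μ] {G : α → β → F} {M : ℝ≥0∞}

theorem lintegral_lintegral_rpow_le (hp : 0 < p) (hG : AEStronglyMeasurable (uncurry G) (μ.prod ν))
    (hM : ∀ᵐ z ∂ν, eLpNorm (G · z) (ENNReal.ofReal p) μ ≤ M) :
    ∫⁻ x, ∫⁻ z, ‖G x z‖ₑ ^ p ∂ν ∂μ ≤ M ^ p := by
  rw [lintegral_lintegral_swap (hG.enorm.pow_const p)]
  calc ∫⁻ z, ∫⁻ x, ‖G x z‖ₑ ^ p ∂μ ∂ν ≤ ∫⁻ _, M ^ p ∂ν := by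
        refine lintegral_mono_ae (hM.mono fun z hz => ?_)
        rw [← eLpNorm_ofReal_rpow_eq_lintegral hp]
        gcongr
    _ = M ^ p := by simp

theorem eLpNorm_integral_le_of_ae_eLpNorm_le [NormedSpace ℝ F] (hp : 1 ≤ p)
    (hG : AEStronglyMeasurable (uncurry G) (μ.prod ν))
    (hM : ∀ᵐ z ∂ν, eLpNorm (G · z) (ENNReal.ofReal p) μ ≤ M) :
    eLpNorm (fun x => ∫ z, G x z ∂ν) (ENNReal.ofReal p) μ ≤ M := by
  have hp0 : 0 < p := zero_lt_one.trans_le hp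
  rw [← ENNReal.rpow_le_rpow_iff hp0, eLpNorm_ofReal_rpow_eq_lintegral hp0]
  exact (lintegral_mono fun x => enorm_integral_rpow_le_lintegral hp (G x)).trans
    (lintegral_lintegral_rpow_le hp0 hG hM)

theorem ae_integrable_of_ae_eLpNorm_le (hp : 1 ≤ p)
    (hG : AEStronglyMeasurable (uncurry G) (μ.prod ν))
    (hM : ∀ᵐ z ∂ν, eLpNorm (G · z) (ENNReal.ofReal p) μ ≤ M) (hM_top : M ≠ ∞) :
    ∀ᵐ x ∂μ, Integrable (G x) ν := by
  have hp0 : 0 < p := zero_lt_one.trans_le hp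
  have hfin : ∀ᵐ x ∂μ, ∫⁻ z, ‖G x z‖ₑ ^ p ∂ν < ∞ :=
    ae_lt_top' (hG.enorm.pow_const p).lintegral_prod_right'
      ((lintegral_lintegral_rpow_le hp0 hG hM).trans_lt (by finiteness)).ne
  filter_upwards [hfin, hG.prodMk_left] with x hx hGx
  refine MemLp.integrable (q := ENNReal.ofReal p) (by simpa using hp) ⟨hGx, ?_⟩
  rw [← ENNReal.rpow_lt_rpow_iff hp0, eLpNorm_ofReal_rpow_eq_lintegral hp0]
  simpa [ENNReal.top_rpow_of_pos hp0] using hx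

variable [NormedSpace ℝ F] {ρ : Measure α} {T : α → β → α} {C : ℝ≥0∞} {f : α → F}

theorem eLpNorm_integral_comp_le (hp : 1 ≤ p) (hT : Measurable (uncurry T))
    (hmap : ∀ᵐ z ∂ν, μ.map (T · z) ≤ C • ρ) (hf : AEStronglyMeasurable f ρ) :
    eLpNorm (fun x => ∫ z, f (T x z) ∂ν) (ENNReal.ofReal p) μ
      ≤ C ^ (1 / p) * eLpNorm f (ENNReal.ofReal p) ρ :=
  eLpNorm_integral_le_of_ae_eLpNorm_le hp
    (hf.comp_quasiMeasurePreserving (quasiMeasurePreserving_uncurry_of_map_le hT hmap))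
    (ae_eLpNorm_comp_le_of_map_le hT hmap hf (zero_lt_one.trans_le hp))

theorem memLp_integral_comp (hp : 1 ≤ p) (hT : Measurable (uncurry T))
    (hmap : ∀ᵐ z ∂ν, μ.map (T · z) ≤ C • ρ) (hC : C ≠ ∞) (hf : MemLp f (ENNReal.ofReal p) ρ) :
    MemLp (fun x => ∫ z, f (T x z) ∂ν) (ENNReal.ofReal p) μ :=
  ⟨(hf.1.comp_quasiMeasurePreserving
      (quasiMeasurePreserving_uncurry_of_map_le hT hmap)).integral_prod_right',
    (eLpNorm_integral_comp_le hp hT hmap hf.1).trans_lt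
      (ENNReal.mul_lt_top (by finiteness) hf.2)⟩

theorem eLpNorm_integral_comp_sub_le [CompleteSpace F] (hp : 1 ≤ p) (hT : Measurable (uncurry T))
    (hmap : ∀ᵐ z ∂ν, μ.map (T · z) ≤ C • ρ) (hC : C ≠ ∞) (hf : MemLp f (ENNReal.ofReal p) ρ)
    (hμρ : μ ≪ ρ) (hM : ∀ᵐ z ∂ν, eLpNorm (fun x => f (T x z) - f x) (ENNReal.ofReal p) μ ≤ M) :
    eLpNorm (fun x => ∫ z, f (T x z) ∂ν - f x) (ENNReal.ofReal p) μ ≤ M := by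
  have hG : AEStronglyMeasurable (fun q : α × β => f (T q.1 q.2)) (μ.prod ν) :=
    hf.1.comp_quasiMeasurePreserving (quasiMeasurePreserving_uncurry_of_map_le hT hmap)
  have hint : ∀ᵐ x ∂μ, Integrable (fun z => f (T x z)) ν :=
    ae_integrable_of_ae_eLpNorm_le hp hG
      (ae_eLpNorm_comp_le_of_map_le hT hmap hf.1 (zero_lt_one.trans_le hp))
      (ENNReal.mul_ne_top (by finiteness) hf.2.ne)
  have hsub : (fun x => ∫ z, f (T x z) ∂ν - f x) =ᵐ[μ] fun x => ∫ z, f (T x z) - f x ∂ν :=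
    hint.mono fun x hx => by dsimp only; rw [integral_sub hx (integrable_const _), integral_const,
      probReal_univ, one_smul]
  rw [eLpNorm_congr_ae hsub]
  exact eLpNorm_integral_le_of_ae_eLpNorm_le hp (hG.sub
    ((hf.1.mono_ac hμρ).comp_quasiMeasurePreserving Measure.quasiMeasurePreserving_fst)) hM

end ProbabilityAverage

section Geometry

variable {E : Type*} [NormedAddCommGroup E] [NormedSpace ℝ E] {Ω ω : Set E} {ψ : E → ℝ} {L : ℝ}
  {z : E}

theorem ball_subset_of_ofReal_le_infEDist_frontier (hΩ : IsOpen Ω) {x : E} (hx : x ∈ Ω) {r : ℝ}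
    (h : ENNReal.ofReal r ≤ Metric.infEDist x (frontier Ω)) : ball x r ⊆ Ω := by
  rcases le_or_gt r 0 with hr | hr
  · simp [ball_eq_empty.2 hr]
  refine (convex_ball x r).isPreconnected.subset_of_closure_inter_subset hΩ
    ⟨x, mem_ball_self hr, hx⟩ fun y ⟨hyΩ, hyr⟩ => ?_
  rw [closure_eq_self_union_frontier] at hyΩ
  refine hyΩ.resolve_right fun hyf => ?_
  have hlt : edist x y < Metric.infEDist x (frontier Ω) :=
    (edist_lt_ofReal.2 (by rwa [mem_ball, dist_comm] at hyr)).trans_le h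
  exact (Metric.infEDist_le_edist_of_mem hyf).not_gt hlt

theorem add_smul_mem_of_ball_subset {x : E} {r : ℝ} (hx : x ∈ Ω) (hr : 0 ≤ r)
    (hball : ball x r ⊆ Ω) (hz : ‖z‖ < 1) : x + r • z ∈ Ω := by
  rcases hr.eq_or_lt with rfl | hr
  · simpa using hx
  refine hball (add_mem_ball_iff_norm.2 ?_)
  rw [norm_smul, Real.norm_of_nonneg hr.le]
  exact mul_lt_of_lt_one_right hr hz

theorem injOn_add_smul (hΩ : IsOpen Ω) (hψ : DifferentiableOn ℝ ψ Ω)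
    (hψL : ∀ x ∈ Ω, ‖fderiv ℝ ψ x‖ ≤ L) (hL : L < 1) (hψ0 : ∀ x ∈ ω, 0 ≤ ψ x)
    (hball : ∀ x ∈ ω, ball x (ψ x) ⊆ Ω) (hz : ‖z‖ < 1) :
    InjOn (fun x => x + ψ x • z) ω := by
  intro x hx y hy hxy
  wlog hle : ψ x ≤ ψ y generalizing x y
  · exact (this hy hx hxy.symm (le_of_not_ge hle)).symm
  have hsub : x - y = (ψ y - ψ x) • z := by
    rw [sub_smul]
    linear_combination (norm := module) hxy
  rcases (sub_nonneg.2 hle).eq_or_lt with hd | hd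
  · rwa [← hd, zero_smul, sub_eq_zero] at hsub
  exfalso
  have hnorm : ‖x - y‖ = (ψ y - ψ x) * ‖z‖ := by
    rw [hsub, norm_smul, Real.norm_of_nonneg hd.le]
  have hxball : x ∈ ball y (ψ y) := by
    rw [mem_ball, dist_eq_norm, hnorm]
    nlinarith [hψ0 x hx, norm_nonneg z]
  have hlip : ‖ψ x - ψ y‖ ≤ L * ‖x - y‖ :=
    (convex_ball y (ψ y)).norm_image_sub_le_of_norm_fderiv_le
      (fun w hw => hψ.differentiableAt (hΩ.mem_nhds (hball y hy hw)))
      (fun w hw => hψL w (hball y hy hw)) (mem_ball_self (nonempty_ball.1 ⟨x, hxball⟩)) hxball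
  rw [hnorm, Real.norm_eq_abs, abs_sub_comm, abs_of_pos hd] at hlip
  nlinarith [norm_nonneg z, mul_pos hd (sub_pos.2 hz), mul_pos hd (sub_pos.2 hL)]

theorem det_id_add_smulRight [FiniteDimensional ℝ E] (ℓ : E →L[ℝ] ℝ) (v : E) :
    (ContinuousLinearMap.id ℝ E + ℓ.smulRight v).det = 1 + ℓ v := by
  classical
  set b := Module.finBasis ℝ E
  have hcoe : ((ContinuousLinearMap.id ℝ E + ℓ.smulRight v : E →L[ℝ] E) : E →ₗ[ℝ] E)
      = LinearMap.id + (ℓ : E →ₗ[ℝ] ℝ).smulRight v := by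
    ext x; simp
  rw [ContinuousLinearMap.det, hcoe, ← LinearMap.det_toMatrix b]
  have hM : LinearMap.toMatrix b b (LinearMap.id + (ℓ : E →ₗ[ℝ] ℝ).smulRight v)
      = 1 + Matrix.replicateCol Unit (fun i => b.repr v i)
          * Matrix.replicateRow Unit (fun j => ℓ (b j)) := by
    ext i j
    simp [LinearMap.toMatrix_apply, Matrix.mul_apply, Matrix.one_apply, Module.Basis.repr_self,
      Finsupp.single_apply, mul_comm, eq_comm]
  rw [hM, Matrix.det_one_add_replicateCol_mul_replicateRow]
  congr 1
  conv_rhs => rw [← b.sum_repr v, map_sum]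
  simp [dotProduct, mul_comm]

end Geometry

section ChangeOfVariables

variable {E : Type*} [NormedAddCommGroup E] [NormedSpace ℝ E] [FiniteDimensional ℝ E]
  [MeasurableSpace E] [BorelSpace E] (μ : Measure E) [μ.IsAddHaarMeasure]
  {Ω ω : Set E} {ψ : E → ℝ} {L : ℝ} {z : E}

theorem ofReal_mul_le_addHaar_image_add_smul {s : Set E} (hs : MeasurableSet s)
    (hψ : ∀ x ∈ s, DifferentiableAt ℝ ψ x) (hinj : InjOn (fun x => x + ψ x • z) s)
    (hψL : ∀ x ∈ s, ‖fderiv ℝ ψ x‖ ≤ L) (hz : ‖z‖ ≤ 1) :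
    ENNReal.ofReal (1 - L) * μ s ≤ μ ((fun x => x + ψ x • z) '' s) := by
  have hderiv : ∀ x ∈ s, HasFDerivWithinAt (fun x => x + ψ x • z)
      (ContinuousLinearMap.id ℝ E + (fderiv ℝ ψ x).smulRight z) s x := fun x hx =>
    ((hasFDerivAt_id x).add ((hψ x hx).hasFDerivAt.smul_const z)).hasFDerivWithinAt
  have hdet : ∀ x ∈ s, 1 - L ≤ |(ContinuousLinearMap.id ℝ E + (fderiv ℝ ψ x).smulRight z).det| := by
    intro x hx
    rw [det_id_add_smulRight]
    have : |fderiv ℝ ψ x z| ≤ L :=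
      ((fderiv ℝ ψ x).le_opNorm z).trans
        ((mul_le_of_le_one_right (norm_nonneg _) hz).trans (hψL x hx))
    exact (by linarith [neg_abs_le (fderiv ℝ ψ x z)] : 1 - L ≤ 1 + fderiv ℝ ψ x z).trans
      (le_abs_self _)
  calc ENNReal.ofReal (1 - L) * μ s = ∫⁻ _ in s, ENNReal.ofReal (1 - L) ∂μ :=
        (setLIntegral_const s _).symm
    _ ≤ ∫⁻ x in s, ENNReal.ofReal
          |(ContinuousLinearMap.id ℝ E + (fderiv ℝ ψ x).smulRight z).det| ∂μ :=
        setLIntegral_mono' hs fun x hx => ENNReal.ofReal_le_ofReal (hdet x hx)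
    _ ≤ μ ((fun x => x + ψ x • z) '' s) :=
        lintegral_abs_det_fderiv_le_addHaar_image μ hs hderiv hinj

/-- `ψ'` is a measurable function agreeing with `ψ` on `ω`: without measurability, `Measure.map`
would take the junk value `0`. -/
theorem map_restrict_add_smul_le (hΩ : IsOpen Ω) (hψ : DifferentiableOn ℝ ψ Ω)
    (hψL : ∀ x ∈ Ω, ‖fderiv ℝ ψ x‖ ≤ L) (hL : L < 1) (hω : MeasurableSet ω) (hωΩ : ω ⊆ Ω)
    (hψ0 : ∀ x ∈ ω, 0 ≤ ψ x) (hball : ∀ x ∈ ω, ball x (ψ x) ⊆ Ω)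
    {Lω : ℝ} (hLω : Lω < 1) (hψLω : ∀ x ∈ ω, ‖fderiv ℝ ψ x‖ ≤ Lω) (hz : ‖z‖ < 1)
    {ψ' : E → ℝ} (hψ' : Measurable ψ') (hψψ' : EqOn ψ' ψ ω) :
    (μ.restrict ω).map (fun x => x + ψ' x • z) ≤ (ENNReal.ofReal (1 - Lω))⁻¹ • μ.restrict Ω := by
  have hT' : Measurable fun x => x + ψ' x • z := measurable_id.add (hψ'.smul_const z)
  refine Measure.le_iff.2 fun N hN => ?_
  set s := (fun x => x + ψ' x • z) ⁻¹' N ∩ ω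
  have hs : MeasurableSet s := (hT' hN).inter hω
  have himage : (fun x => x + ψ x • z) '' s ⊆ N ∩ Ω := by
    rintro _ ⟨x, ⟨hxN, hxω⟩, rfl⟩
    refine ⟨by simpa only [mem_preimage, hψψ' hxω] using hxN, ?_⟩
    exact add_smul_mem_of_ball_subset (hωΩ hxω) (hψ0 x hxω) (hball x hxω) hz
  rw [Measure.map_apply hT' hN, Measure.restrict_apply (hT' hN), Measure.smul_apply, smul_eq_mul,
    Measure.restrict_apply hN, ← ENNReal.mul_le_iff_le_inv (by simpa using hLω) (by simp)]
  calc ENNReal.ofReal (1 - Lω) * μ s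
      ≤ μ ((fun x => x + ψ x • z) '' s) :=
        ofReal_mul_le_addHaar_image_add_smul μ hs
          (fun x hx => hψ.differentiableAt (hΩ.mem_nhds (hωΩ hx.2)))
          ((injOn_add_smul hΩ hψ hψL hL hψ0 hball hz).mono inter_subset_right)
          (fun x hx => hψLω x hx.2) hz.le
    _ ≤ μ (N ∩ Ω) := measure_mono himage

theorem exists_measurable_eqOn_map_restrict_add_smul_le (hΩ : IsOpen Ω)
    (hψ : DifferentiableOn ℝ ψ Ω) (hψ0 : ∀ x ∈ Ω, 0 ≤ ψ x) (hL : L < 1)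
    (hψL : ∀ x ∈ Ω, ‖fderivWithin ℝ ψ Ω x‖ ≤ L) (hω : MeasurableSet ω)
    (hωΩ : ∀ x ∈ ω, x ∈ Ω ∧ ENNReal.ofReal (ψ x) ≤ Metric.infEDist x (frontier Ω)) :
    ∃ ψ' : E → ℝ, Measurable ψ' ∧ EqOn ψ' ψ ω ∧
      ∀ Lω < 1, (∀ x ∈ ω, ‖fderivWithin ℝ ψ Ω x‖ ≤ Lω) → ∀ z ∈ ball (0 : E) 1,
        (μ.restrict ω).map (fun x => x + ψ' x • z)
          ≤ (ENNReal.ofReal (1 - Lω))⁻¹ • μ.restrict Ω := by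
  classical
  have hωΩ' : ω ⊆ Ω := fun x hx => (hωΩ x hx).1
  have hfderiv : ∀ x ∈ Ω, fderivWithin ℝ ψ Ω x = fderiv ℝ ψ x := fun x hx =>
    fderivWithin_of_isOpen hΩ hx
  have hψ' : Measurable (ω.piecewise ψ 0) :=
    (hψ.continuousOn.mono hωΩ').measurable_piecewise continuousOn_const hω
  refine ⟨_, hψ', fun x hx => piecewise_eq_of_mem _ _ _ hx, fun Lω hLω hb z hz => ?_⟩
  exact map_restrict_add_smul_le μ hΩ hψ (fun x hx => hfderiv x hx ▸ hψL x hx) hL hω hωΩ'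
    (fun x hx => hψ0 x (hωΩ' hx))
    (fun x hx => ball_subset_of_ofReal_le_infEDist_frontier hΩ (hωΩ x hx).1 (hωΩ x hx).2) hLω
    (fun x hx => hfderiv x (hωΩ' hx) ▸ hb x hx) (by simpa using hz) hψ'
    fun x hx => piecewise_eq_of_mem _ _ _ hx

end ChangeOfVariables

theorem ENNReal.inv_ofReal_rpow {a : ℝ} (ha : 0 < a) (r : ℝ) :
    (ENNReal.ofReal a)⁻¹ ^ r = ENNReal.ofReal (a ^ (-r)) := by
  rw [ENNReal.inv_rpow, ENNReal.ofReal_rpow_of_pos ha, Real.rpow_neg ha.le,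
    ENNReal.ofReal_inv_of_pos (by positivity)]

section Mollifier

variable {m : ℕ} {φ : Euc m → ℝ}

def mollifierMeasure (φ : Euc m → ℝ) : Measure (Euc m) :=
  (volume.restrict (ball 0 1)).withDensity fun z => ENNReal.ofReal (φ z)

theorem isProbabilityMeasure_mollifierMeasure (hφ0 : ∀ z, 0 ≤ φ z)
    (hφ1 : ∫ z in ball (0 : Euc m) 1, φ z = 1) : IsProbabilityMeasure (mollifierMeasure φ) := by
  constructor
  rw [mollifierMeasure, withDensity_apply _ MeasurableSet.univ, Measure.restrict_univ,
    ← ofReal_integral_eq_lintegral_ofReal (Integrable.of_integral_ne_zero (by simp [hφ1]))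
      (ae_of_all _ hφ0), hφ1, ENNReal.ofReal_one]

theorem ae_mem_ball_mollifierMeasure : ∀ᵐ z ∂mollifierMeasure φ, z ∈ ball (0 : Euc m) 1 :=
  (withDensity_absolutelyContinuous _ _).ae_le (ae_restrict_mem measurableSet_ball)

theorem mollifyVar_eq_integral_mollifierMeasure (hφ0 : ∀ z, 0 ≤ φ z)
    (hφ1 : ∫ z in ball (0 : Euc m) 1, φ z = 1) {ν : ℕ} (ψ : Euc m → ℝ) (u : Euc m → Euc ν)
    (x : Euc m) : mollifyVar φ ψ u x = ∫ z, u (x + ψ x • z) ∂mollifierMeasure φ := by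
  rw [mollifierMeasure, integral_withDensity_eq_integral_toReal_smul₀
    (Integrable.of_integral_ne_zero (by simp [hφ1])).aemeasurable.ennreal_ofReal
    (ae_of_all _ fun _ => ENNReal.ofReal_lt_top)]
  simp_rw [ENNReal.toReal_ofReal (hφ0 _)]
  rfl

end Mollifier

theorem adaptive_smoothing_Lp_general
    (m ν : ℕ) (p : ℝ) (hp : 1 ≤ p)
    (Ω : Set (Euc m)) (hΩ : IsOpen Ω)
    (φ : Euc m → ℝ)
    (hφpos : ∀ z, 0 ≤ φ z) (hφint : ∫ z in ball (0 : Euc m) 1, φ z = 1)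
    (ψ : Euc m → ℝ) (hψsmooth : ContDiffOn ℝ (⊤ : ℕ∞) ψ Ω) (hψpos : ∀ x ∈ Ω, 0 ≤ ψ x)
    (L : ℝ) (hL : L < 1) (hψL : ∀ x ∈ Ω, ‖fderivWithin ℝ ψ Ω x‖ ≤ L)
    (u : Euc m → Euc ν) (hu : MemLp u (ENNReal.ofReal p) (volume.restrict Ω))
    (ω : Set (Euc m)) (hω : IsOpen ω)
    (hωΩ : ∀ x ∈ ω, x ∈ Ω ∧ ENNReal.ofReal (ψ x) ≤ EMetric.infEdist x (frontier Ω)) :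
    MemLp (mollifyVar φ ψ u) (ENNReal.ofReal p) (volume.restrict ω) ∧
    (∀ Lω : ℝ, Lω < 1 → (∀ x ∈ ω, ‖fderivWithin ℝ ψ Ω x‖ ≤ Lω) →
      eLpNorm (mollifyVar φ ψ u) (ENNReal.ofReal p) (volume.restrict ω)
        ≤ ENNReal.ofReal ((1 - Lω) ^ (-(1 / p))) *
            eLpNorm u (ENNReal.ofReal p) (volume.restrict Ω)) ∧
    eLpNorm (fun x => mollifyVar φ ψ u x - u x) (ENNReal.ofReal p) (volume.restrict ω)
      ≤ ⨆ v ∈ ball (0 : Euc m) 1,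
          eLpNorm (fun x => u (x + ψ x • v) - u x) (ENNReal.ofReal p) (volume.restrict ω) := by
  have := isProbabilityMeasure_mollifierMeasure hφpos hφint
  have hωΩ' : ω ⊆ Ω := fun x hx => (hωΩ x hx).1
  obtain ⟨ψ', hψ', hψψ', hmap⟩ := exists_measurable_eqOn_map_restrict_add_smul_le volume hΩ
    (hψsmooth.differentiableOn (by simp)) hψpos hL hψL hω.measurableSet hωΩ
  have hT : Measurable (uncurry fun x z : Euc m => x + ψ' x • z) :=
    measurable_fst.add ((hψ'.comp measurable_fst).smul measurable_snd)
  have hmapL := (ae_mem_ball_mollifierMeasure (φ := φ)).mono (hmap L hL fun x hx => hψL x (hωΩ' hx))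
  have hmoll : mollifyVar φ ψ u =ᵐ[volume.restrict ω]
      fun x => ∫ z, u (x + ψ' x • z) ∂mollifierMeasure φ :=
    (ae_restrict_mem hω.measurableSet).mono fun x hx => by
      simp only [mollifyVar_eq_integral_mollifierMeasure hφpos hφint, hψψ' hx]
  refine ⟨(memLp_integral_comp hp hT hmapL (by simpa using hL) hu).ae_eq hmoll.symm,
    fun Lω hLω hb => ?_, ?_⟩
  · rw [eLpNorm_congr_ae hmoll, ← ENNReal.inv_ofReal_rpow (by linarith)]
    exact eLpNorm_integral_comp_le hp hT (ae_mem_ball_mollifierMeasure.mono (hmap Lω hLω hb)) hu.1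
  · rw [eLpNorm_congr_ae (hmoll.mono fun x hx => by rw [hx])]
    refine eLpNorm_integral_comp_sub_le hp hT hmapL (by simpa using hL) hu
      (Measure.restrict_mono hωΩ' le_rfl).absolutelyContinuous ?_
    filter_upwards [ae_mem_ball_mollifierMeasure] with z hz
    refine le_of_eq_of_le (eLpNorm_congr_ae ?_) (le_biSup (fun v => eLpNorm
      (fun x => u (x + ψ x • v) - u x) (ENNReal.ofReal p) (volume.restrict ω)) hz)
    filter_upwards [ae_restrict_mem hω.measurableSet] with x hx
    rw [hψψ' hx]

/-- adaptive smoothing, `L^p` estimates: if `φ` is a mollifier and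
`ψ ∈ C^∞(Ω)` is nonnegative with `‖Dψ‖_{L^∞(Ω)} < 1`, then for every `u ∈ L^p(Ω; ℝ^ν)` and
every open set `ω ⊆ {x ∈ Ω : dist(x, ∂Ω) ≥ ψ(x)}` one has `φ_ψ ∗ u ∈ L^p(ω; ℝ^ν)`, with
`‖φ_ψ ∗ u‖_{L^p(ω)} ≤ (1 - ‖Dψ‖_{L^∞(ω)})^{-1/p} ‖u‖_{L^p(Ω)}` and
`‖φ_ψ ∗ u - u‖_{L^p(ω)} ≤ sup_{v ∈ B_1} ‖τ_{ψv}u - u‖_{L^p(ω)}`. -/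
theorem adaptive_smoothing_Lp
    (m ν : ℕ) (p : ℝ) (hp : 1 ≤ p)
    (Ω : Set (Euc m)) (hΩ : IsOpen Ω)
    (φ : Euc m → ℝ) (hφsmooth : ContDiff ℝ (⊤ : ℕ∞) φ) (hφsupp : HasCompactSupport φ)
    (hφsupp' : tsupport φ ⊆ ball (0 : Euc m) 1)
    (hφpos : ∀ z, 0 ≤ φ z) (hφint : ∫ z in ball (0 : Euc m) 1, φ z = 1)
    (ψ : Euc m → ℝ) (hψsmooth : ContDiffOn ℝ (⊤ : ℕ∞) ψ Ω) (hψpos : ∀ x ∈ Ω, 0 ≤ ψ x)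
    (L : ℝ) (hL : L < 1) (hψL : ∀ x ∈ Ω, ‖fderivWithin ℝ ψ Ω x‖ ≤ L)
    (u : Euc m → Euc ν) (hu : MemLp u (ENNReal.ofReal p) (volume.restrict Ω))
    (ω : Set (Euc m)) (hω : IsOpen ω)
    (hωΩ : ∀ x ∈ ω, x ∈ Ω ∧ ENNReal.ofReal (ψ x) ≤ EMetric.infEdist x (frontier Ω)) :
    MemLp (mollifyVar φ ψ u) (ENNReal.ofReal p) (volume.restrict ω) ∧
    (∀ Lω : ℝ, Lω < 1 → (∀ x ∈ ω, ‖fderivWithin ℝ ψ Ω x‖ ≤ Lω) →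
      eLpNorm (mollifyVar φ ψ u) (ENNReal.ofReal p) (volume.restrict ω)
        ≤ ENNReal.ofReal ((1 - Lω) ^ (-(1 / p))) *
            eLpNorm u (ENNReal.ofReal p) (volume.restrict Ω)) ∧
    eLpNorm (fun x => mollifyVar φ ψ u x - u x) (ENNReal.ofReal p) (volume.restrict ω)
      ≤ ⨆ v ∈ ball (0 : Euc m) 1,
          eLpNorm (fun x => u (x + ψ x • v) - u x) (ENNReal.ofReal p) (volume.restrict ω) :=
  adaptive_smoothing_Lp_general m ν p hp Ω hΩ φ hφpos hφint ψ hψsmooth hψpos L hL hψL u hu ω hω hωΩ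
end
end

section
/- Let K^m be a cubication of radius η > 0 whose underlying set is a cube, let ℓ ∈ {0,…,m−1}, and let N^n be a compact smooth manifold embedded in ℝ^ν. If the homotopy group π_ℓ(N^n) is trivial, then for every continuous map u ∈ C^0(K^ℓ; N^n) there exists a continuous map f ∈ C^0(K^m; N^n) such that f restricted to K^ℓ equals u. -/
open MeasureTheory Metric Set Filter
open scoped ENNReal Topology Pointwise

noncomputable section

/-- A face of the cubication of `ℝ^m` of radius `η`, given by its set `free` of free coordinates
and its center; the face is the set of points agreeing with the center outside `free` and within
distance `η` of the center in each free coordinate. -/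
structure GridFace (m : ℕ) where
  free : Finset (Fin m)
  center : Euc m

namespace GridFace

/-- The set of points of the face, for a cubication of radius `η`. -/
def toSet {m : ℕ} (η : ℝ) (F : GridFace m) : Set (Euc m) :=
  {x | (∀ i ∈ F.free, |x i - F.center i| ≤ η) ∧ ∀ i ∉ F.free, x i = F.center i}

/-- `F` is a face of the cubication of `ℝ^m` of radius `η` whose cubes are centered at the
points of `c + 2ηℤ^m`: free coordinates of the center are at cube centers (even multiples
of `η` from `c`), fixed ones at vertex coordinates (odd multiples of `η` from `c`). -/
def IsPrimal {m : ℕ} (c : Euc m) (η : ℝ) (F : GridFace m) : Prop :=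
  (∀ i ∈ F.free, ∃ z : ℤ, F.center i = c i + 2 * η * z) ∧
  ∀ i ∉ F.free, ∃ z : ℤ, F.center i = c i + η + 2 * η * z

/-- `G` is a face of the cube/face `F` (for radius `η`). -/
def IsSubface {m : ℕ} (η : ℝ) (G F : GridFace m) : Prop :=
  G.free ⊆ F.free ∧ (∀ i ∈ G.free, G.center i = F.center i) ∧
  (∀ i ∉ F.free, G.center i = F.center i) ∧
  ∀ i ∈ F.free, i ∉ G.free → G.center i = F.center i - η ∨ G.center i = F.center i + η

end GridFace

/-- The union of the sets of the faces of a family of faces. -/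
def skelUnion {m : ℕ} (η : ℝ) (S : Set (GridFace m)) : Set (Euc m) :=
  ⋃ F ∈ S, F.toSet η

/-- The skeleton of dimension `i` of a family of faces: all `i`-dimensional faces of members
of the family. -/
def skelFaces {m : ℕ} (η : ℝ) (S : Set (GridFace m)) (i : ℕ) : Set (GridFace m) :=
  {G | G.free.card = i ∧ ∃ F ∈ S, G.IsSubface η F}

/-- `S` is a subskeleton of dimension `ℓ` of the cubication of `ℝ^m` of radius `η`
with cubes centered at the points of `c + 2ηℤ^m`. -/
def IsSubskeleton {m : ℕ} (c : Euc m) (η : ℝ) (ℓ : ℕ) (S : Set (GridFace m)) : Prop :=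
  ∀ F ∈ S, F.IsPrimal c η ∧ F.free.card = ℓ

/-- The faces of the dual skeleton of dimension `d` associated with the family `S`: all
translates `σ + x - a` of `d`-dimensional faces `σ` of `S`, where `a` is the center and `x`
a vertex of a cube (so that `x - a` has all coordinates equal to `±η`). -/
def dualFaces {m : ℕ} (η : ℝ) (S : Set (GridFace m)) (d : ℕ) : Set (GridFace m) :=
  {G | ∃ F ∈ skelFaces η S d, ∃ ε : Fin m → Bool,
    G.free = F.free ∧ ∀ i, G.center i = F.center i + (if ε i then η else -η)}

/-- The set of points of the dual skeleton `T^{ℓ*}`, `ℓ* = m - ℓ - 1`, of the `ℓ`-dimensional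
skeleton of the family `S`. -/
def dualSkelSet {m : ℕ} (η : ℝ) (S : Set (GridFace m)) (ℓ : ℕ) : Set (Euc m) :=
  skelUnion η (dualFaces η S (m - ℓ - 1))

/-- The geometric support of `Φ`: the closure of the set where `Φ` differs from the identity. -/
def geomSupp {E : Type*} [TopologicalSpace E] (Φ : E → E) : Set E :=
  closure {x | Φ x ≠ x}

/-- The (absolute value of the) Jacobian determinant of `Φ`, computed with derivatives
within `s`. -/
def jacDetWithin {m : ℕ} (Φ : Euc m → Euc m) (s : Set (Euc m)) (x : Euc m) : ℝ :=
  |LinearMap.det ((fderivWithin ℝ Φ s x : Euc m →L[ℝ] Euc m) : Euc m →ₗ[ℝ] Euc m)|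

/-- The (absolute value of the) Jacobian determinant of `Φ`. -/
def jacDet {m : ℕ} (Φ : Euc m → Euc m) (x : Euc m) : ℝ :=
  |LinearMap.det ((fderiv ℝ Φ x : Euc m →L[ℝ] Euc m) : Euc m →ₗ[ℝ] Euc m)|

/-!
Let `v` be a vertex of the cubication. Moving the coordinates of a point to those of `v` one at a
time deforms the `(ℓ - 1)`-skeleton to `v` inside the `ℓ`-skeleton, so `u` composed with this
sweep is a homotopy on `K^{ℓ-1}` from `u` to a constant. Over an `ℓ`-face `σ`, this homotopy,
`u` at time `0` and the constant at time `1` are given on the boundary of `σ × [0, 1]`, an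
`ℓ`-sphere, so `π_ℓ(N) = 0` extends them to `σ × [0, 1]`: this is a null-homotopy of `u` on
`K^ℓ`. For faces `σ` of higher dimension, `σ × [0, 1]` retracts onto
`∂σ × [0, 1] ∪ σ × {1}`, so the null-homotopy extends skeleton by skeleton to `K^m × [0, 1]`,
and at time `0` it is the required extension of `u`. Faces are handled in chart coordinates
where `σ × [0, 1]` is a ball for the max norm, which is homeomorphic to a Euclidean ball.
-/

section

variable {Y Y' Z : Type*} [TopologicalSpace Y] [TopologicalSpace Y'] [TopologicalSpace Z]

/-- `PiTrivial ℓ N` is, by definition, `ExtensionProperty (closedBall 0 1) (sphere 0 1) N`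
in `Euc (ℓ + 1)`. -/
def ExtensionProperty (D A : Set Y) (N : Set Z) : Prop :=
  ∀ f : Y → Z, ContinuousOn f A → MapsTo f A N →
    ∃ F : Y → Z, ContinuousOn F D ∧ MapsTo F D N ∧ EqOn F f A

namespace ExtensionProperty

variable {D A B : Set Y} {N : Set Z}

theorem of_retraction (r : Y → Y) (hr : ContinuousOn r D) (hrD : MapsTo r D A)
    (hrA : ∀ y ∈ A, r y = y) : ExtensionProperty D A N := fun f hf hfN =>
  ⟨f ∘ r, hf.comp hr hrD, hfN.comp hrD, fun y hy => congrArg f (hrA y hy)⟩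

theorem of_chart {D' A' : Set Y'} (h : ExtensionProperty D' A' N) (χ : Y → Y') (ψ : Y' → Y)
    (hχ : ContinuousOn χ D) (hχD : MapsTo χ D D') (hχA : MapsTo χ A A')
    (hψ : ContinuousOn ψ A') (hψA : MapsTo ψ A' A) (hψχ : ∀ y ∈ A, ψ (χ y) = y) :
    ExtensionProperty D A N := by
  intro f hf hfN
  obtain ⟨F, hFc, hFN, hFf⟩ := h (f ∘ ψ) (hf.comp hψ hψA) (hfN.comp hψA)
  refine ⟨F ∘ χ, hFc.comp hχ hχD, hFN.comp hχD, fun y hy => ?_⟩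
  simp only [Function.comp_apply, hFf (hχA hy), hψχ y hy]

theorem trans (hDB : ExtensionProperty D B N) (hBA : ExtensionProperty B A N) (hAB : A ⊆ B) :
    ExtensionProperty D A N := by
  intro f hf hfN
  obtain ⟨F₁, hF₁c, hF₁N, hF₁f⟩ := hBA f hf hfN
  obtain ⟨F₂, hF₂c, hF₂N, hF₂F₁⟩ := hDB F₁ hF₁c hF₁N
  exact ⟨F₂, hF₂c, hF₂N, fun y hy => (hF₂F₁ (hAB hy)).trans (hF₁f hy)⟩

theorem iUnion {ι : Type*} [Finite ι] {P : ι → Set Y} (hB : IsClosed B)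
    (hP : ∀ i, IsClosed (P i)) (hPP : Pairwise fun i j => P i ∩ P j ⊆ B)
    (h : ∀ i, ExtensionProperty (P i) (P i ∩ B) N) :
    ExtensionProperty (B ∪ ⋃ i, P i) B N := by
  classical
  intro f hf hfN
  choose E hEc hEN hEf using fun i =>
    h i f (hf.mono inter_subset_right) (hfN.mono_left inter_subset_right)
  let F : Y → Z := fun y => if hy : ∃ i, y ∈ P i ∧ y ∉ B then E hy.choose y else f y
  have hFB : EqOn F f B := fun y hy => dif_neg fun ⟨_, _, hyB⟩ => hyB hy
  have hFP : ∀ i, EqOn F (E i) (P i) := by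
    intro i y hy
    by_cases hyB : y ∈ B
    · exact (hFB hyB).trans (hEf i ⟨hy, hyB⟩).symm
    · have hex : ∃ j, y ∈ P j ∧ y ∉ B := ⟨i, hy, hyB⟩
      have hji : hex.choose = i := by
        by_contra hne
        exact hyB (hPP hne ⟨hex.choose_spec.1, hy⟩)
      simp only [F, dif_pos hex, hji]
  let Q : Option ι → Set Y := fun o => o.elim B P
  have hQ : B ∪ ⋃ i, P i = ⋃ o, Q o := (iUnion_option Q).symm
  refine ⟨F, ?_, ?_, hFB⟩
  · rw [hQ]
    refine (locallyFinite_of_finite Q).continuousOn_iUnion (fun o => ?_) (fun o => ?_)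
    · cases o with
      | none => exact hB
      | some i => exact hP i
    · cases o with
      | none => exact hf.congr hFB
      | some i => exact (hEc i).congr (hFP i)
  · rintro y (hy | hy)
    · rw [hFB hy]; exact hfN hy
    · obtain ⟨i, hi⟩ := mem_iUnion.mp hy
      rw [hFP i hi]; exact hEN i hi

end ExtensionProperty

end

section

variable {E F Z : Type*} [NormedAddCommGroup E]

theorem mem_closedBall_prod_iff {q : E × ℝ} :
    q ∈ closedBall (0 : E × ℝ) 1 ↔ ‖q.1‖ ≤ 1 ∧ |q.2| ≤ 1 := by
  rw [mem_closedBall_zero_iff, Prod.norm_def, max_le_iff, Real.norm_eq_abs]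

theorem mem_sphere_prod_iff {q : E × ℝ} (hq : q ∈ closedBall (0 : E × ℝ) 1) :
    q ∈ sphere (0 : E × ℝ) 1 ↔ ‖q.1‖ = 1 ∨ |q.2| = 1 := by
  obtain ⟨h₁, h₂⟩ := mem_closedBall_prod_iff.1 hq
  rw [mem_sphere_zero_iff_norm, Prod.norm_def, Real.norm_eq_abs]
  constructor
  · intro h
    rcases max_choice ‖q.1‖ |q.2| with h' | h' <;> rw [h'] at h <;> simp [h]
  · rintro (h | h) <;> refine le_antisymm (max_le h₁ h₂) ?_ <;> rw [← h]
    exacts [le_max_left _ _, le_max_right _ _]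

theorem pi_norm_eq_one_iff {ι : Type*} [Fintype ι] {w : ι → ℝ} (hw : ‖w‖ ≤ 1) :
    ‖w‖ = 1 ↔ ∃ i, |w i| = 1 := by
  constructor
  · intro h
    have : ¬ ∀ i, ‖w i‖ < 1 := fun hlt => ((pi_norm_lt_iff one_pos).2 hlt).ne h
    simp only [not_forall, not_lt] at this
    obtain ⟨i, hi⟩ := this
    exact ⟨i, le_antisymm (h ▸ norm_le_pi_norm w i) hi⟩
  · rintro ⟨i, hi⟩
    exact le_antisymm hw (hi ▸ norm_le_pi_norm w i)

variable [NormedSpace ℝ E] [NormedAddCommGroup F] [NormedSpace ℝ F] [TopologicalSpace Z]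

theorem exists_homeomorph_image_closedBall_sphere [FiniteDimensional ℝ E]
    [FiniteDimensional ℝ F] [Nontrivial E] (h : Module.finrank ℝ E = Module.finrank ℝ F) :
    ∃ Φ : E ≃ₜ F,
      Φ '' closedBall 0 1 = closedBall 0 1 ∧ Φ '' sphere 0 1 = sphere 0 1 := by
  let L := (ContinuousLinearEquiv.ofFinrankEq h).toHomeomorph
  have hconv : Convex ℝ (L '' closedBall 0 1) :=
    (convex_closedBall 0 1).linear_image (ContinuousLinearEquiv.ofFinrankEq h).toLinearMap
  have hint : (interior (L '' closedBall 0 1)).Nonempty := by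
    rw [← L.image_interior, interior_closedBall 0 one_ne_zero]
    exact ⟨L 0, mem_image_of_mem L (mem_ball_self one_pos)⟩
  have hcpt : IsCompact (L '' closedBall 0 1) := (isCompact_closedBall 0 1).image L.continuous
  obtain ⟨Ψ, -, hΨc, hΨf⟩ :=
    exists_homeomorph_image_interior_closure_frontier_eq_unitBall hconv hint hcpt.isBounded
  refine ⟨L.trans Ψ, ?_, ?_⟩
  · change (Ψ ∘ L) '' _ = _
    rw [image_comp, ← hΨc, hcpt.isClosed.closure_eq]
  · change (Ψ ∘ L) '' _ = _
    rw [image_comp, ← hΨf, ← L.image_frontier, frontier_closedBall 0 one_ne_zero]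

theorem PiTrivial.extensionProperty {ℓ ν : ℕ} {N : Set (Euc ν)} (hπ : PiTrivial ℓ N)
    [FiniteDimensional ℝ E] (hE : Module.finrank ℝ E = ℓ + 1) :
    ExtensionProperty (closedBall (0 : E) 1) (sphere 0 1) N := by
  have : Nontrivial E := Module.nontrivial_of_finrank_pos (R := ℝ) (by omega)
  obtain ⟨Φ, hΦb, hΦs⟩ := exists_homeomorph_image_closedBall_sphere (F := Euc (ℓ + 1))
    (by rw [hE, finrank_euclideanSpace_fin])
  refine ExtensionProperty.of_chart (D' := closedBall 0 1) hπ Φ Φ.symm Φ.continuous.continuousOn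
    (hΦb ▸ mapsTo_image Φ _) (hΦs ▸ mapsTo_image Φ _) Φ.symm.continuous.continuousOn ?_
    (fun y _ => Φ.symm_apply_apply y)
  rw [← hΦs]
  rintro _ ⟨y, hy, rfl⟩
  rwa [Φ.symm_apply_apply]

/-- Radial projection from `(0, -2)`, retracting the closed unit ball of `E × ℝ`
(a cylinder for the max norm) onto its lateral boundary and its top. -/
def cylinderRetraction (q : E × ℝ) : E × ℝ :=
  let s := 3 / max (3 * ‖q.1‖) (q.2 + 2)
  (s • q.1, s * (q.2 + 2) - 2)

def cylinderLid : Set (E × ℝ) := {q ∈ closedBall 0 1 | ‖q.1‖ = 1 ∨ q.2 = 1}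

theorem continuousOn_cylinderRetraction :
    ContinuousOn (cylinderRetraction (E := E)) (closedBall 0 1) := by
  have hden : ∀ q ∈ closedBall (0 : E × ℝ) 1, max (3 * ‖q.1‖) (q.2 + 2) ≠ 0 := by
    intro q hq
    have := neg_abs_le q.2
    have := (mem_closedBall_prod_iff.1 hq).2
    exact (lt_of_lt_of_le (by linarith) (le_max_right _ _)).ne'
  have hs : ContinuousOn (fun q : E × ℝ => 3 / max (3 * ‖q.1‖) (q.2 + 2)) (closedBall 0 1) :=
    continuousOn_const.div (by fun_prop) hden
  exact (hs.smul continuous_fst.continuousOn).prodMk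
    ((hs.mul (continuous_snd.add continuous_const).continuousOn).sub continuousOn_const)

theorem cylinderRetraction_mem_cylinderLid {q : E × ℝ} (hq : q ∈ closedBall (0 : E × ℝ) 1) :
    cylinderRetraction q ∈ cylinderLid := by
  obtain ⟨hw, hτ⟩ := mem_closedBall_prod_iff.1 hq
  obtain ⟨hτ₁, hτ₂⟩ := abs_le.1 hτ
  set d := max (3 * ‖q.1‖) (q.2 + 2) with hd
  have hd₁ : 3 * ‖q.1‖ ≤ d := le_max_left _ _
  have hd₂ : q.2 + 2 ≤ d := le_max_right _ _
  have hd₃ : d ≤ 3 := max_le (by linarith) (by linarith)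
  have hd₀ : 0 < d := by linarith
  have hs : (1 : ℝ) ≤ 3 / d := (one_le_div hd₀).2 hd₃
  have hnorm : ‖(3 / d) • q.1‖ = 3 / d * ‖q.1‖ := by
    rw [norm_smul, Real.norm_of_nonneg (by positivity)]
  refine ⟨mem_closedBall_prod_iff.2 ⟨?_, abs_le.2 ⟨?_, ?_⟩⟩, ?_⟩
  · change ‖(3 / d) • q.1‖ ≤ 1
    rw [hnorm, div_mul_eq_mul_div, div_le_one hd₀]
    exact hd₁
  · change -1 ≤ 3 / d * (q.2 + 2) - 2
    nlinarith
  · change 3 / d * (q.2 + 2) - 2 ≤ 1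
    rw [div_mul_eq_mul_div, sub_le_iff_le_add, div_le_iff₀ hd₀]
    linarith
  · rcases max_choice (3 * ‖q.1‖) (q.2 + 2) with h | h
    · left
      change ‖(3 / d) • q.1‖ = 1
      have h' : d = 3 * ‖q.1‖ := hd.trans h
      have : ‖q.1‖ ≠ 0 := fun h0 => by rw [h0, mul_zero] at h'; linarith
      rw [hnorm, h']
      field_simp
    · right
      change 3 / d * (q.2 + 2) - 2 = 1
      rw [hd, h, div_mul_cancel₀ _ (by linarith)]
      norm_num

theorem cylinderRetraction_eq_self {q : E × ℝ} (hq : q ∈ cylinderLid) :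
    cylinderRetraction q = q := by
  obtain ⟨hq, hlid⟩ := hq
  obtain ⟨hw, hτ⟩ := mem_closedBall_prod_iff.1 hq
  have hd : max (3 * ‖q.1‖) (q.2 + 2) = 3 := by
    have := (abs_le.1 hτ).2
    rcases hlid with h | h
    · rw [h, mul_one]; exact max_eq_left (by linarith)
    · rw [h, max_eq_right (by linarith : 3 * ‖q.1‖ ≤ 1 + 2)]
      norm_num
  simp only [cylinderRetraction, hd, div_self (three_ne_zero' ℝ), one_smul, one_mul,
    add_sub_cancel_right, Prod.mk.eta]

theorem extensionProperty_closedBall_cylinderLid {N : Set Z} :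
    ExtensionProperty (closedBall (0 : E × ℝ) 1) cylinderLid N :=
  .of_retraction cylinderRetraction continuousOn_cylinderRetraction
    (fun _ hq => cylinderRetraction_mem_cylinderLid hq) (fun _ hq => cylinderRetraction_eq_self hq)

end

namespace GridFace

variable {m : ℕ} {η : ℝ}

theorem center_mem_toSet (hη : 0 ≤ η) (G : GridFace m) :
    G.center ∈ G.toSet η :=
  ⟨fun i _ => by simp [hη], fun _ _ => rfl⟩

def boundary (η : ℝ) (G : GridFace m) : Set (Euc m) :=
  {x ∈ G.toSet η | ∃ i ∈ G.free, |x i - G.center i| = η}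

theorem isClosed_toSet (η : ℝ) (G : GridFace m) : IsClosed (G.toSet η) := by
  have hcoord : ∀ i, Continuous fun x : Euc m => x i := fun i => PiLp.continuous_apply 2 _ i
  have : G.toSet η = (⋂ i ∈ G.free, {x : Euc m | |x i - G.center i| ≤ η}) ∩
      ⋂ i ∈ G.freeᶜ, {x : Euc m | x i = G.center i} := by
    ext x
    simp [GridFace.toSet]
  rw [this]
  exact (isClosed_biInter fun i _ => isClosed_le ((hcoord i).sub continuous_const).abs
    continuous_const).inter (isClosed_biInter fun i _ => isClosed_eq (hcoord i) continuous_const)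

/-- Affine coordinates on `Euc m × ℝ` in which `G × [0, 1]` is the closed unit ball of
`(G.free → ℝ) × ℝ`. -/
def cylinderChart (η : ℝ) (G : GridFace m) (p : Euc m × ℝ) : (G.free → ℝ) × ℝ :=
  (fun i => (p.1 i - G.center i) / η, 2 * p.2 - 1)

def cylinderChartInv (η : ℝ) (G : GridFace m) (q : (G.free → ℝ) × ℝ) : Euc m × ℝ :=
  (WithLp.toLp 2 fun i => if h : i ∈ G.free then G.center i + η * q.1 ⟨i, h⟩ else G.center i,
    (q.2 + 1) / 2)

variable (G : GridFace m)

theorem continuous_cylinderChart : Continuous (G.cylinderChart η) := by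
  refine Continuous.prodMk (continuous_pi fun i => ?_) (by fun_prop)
  exact (((PiLp.continuous_apply 2 (fun _ : Fin m => ℝ) i).comp continuous_fst).sub
    continuous_const).div_const η

theorem continuous_cylinderChartInv : Continuous (G.cylinderChartInv η) := by
  refine Continuous.prodMk ((PiLp.continuous_toLp 2 _).comp (continuous_pi fun i => ?_))
    (by fun_prop)
  by_cases hi : i ∈ G.free
  · simp only [dif_pos hi]
    exact continuous_const.add
      (continuous_const.mul ((continuous_apply _).comp continuous_fst))
  · simp only [dif_neg hi]
    exact continuous_const

theorem cylinderChartInv_cylinderChart (hη : η ≠ 0) {p : Euc m × ℝ}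
    (hp : p.1 ∈ G.toSet η) :
    G.cylinderChartInv η (G.cylinderChart η p) = p := by
  refine Prod.ext (PiLp.ext fun i => ?_) (by simp [cylinderChart, cylinderChartInv])
  by_cases hi : i ∈ G.free
  · simp only [cylinderChartInv, cylinderChart, PiLp.toLp_apply, dif_pos hi,
      mul_div_cancel₀ _ hη, add_sub_cancel]
  · simp [cylinderChartInv, hi, hp.2 i hi]

theorem cylinderChart_mem_closedBall (hη : 0 < η) {p : Euc m × ℝ}
    (hp : p ∈ G.toSet η ×ˢ Icc 0 1) : G.cylinderChart η p ∈ closedBall 0 1 := by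
  obtain ⟨⟨hx, -⟩, ht₀, ht₁⟩ := hp
  refine mem_closedBall_prod_iff.2 ⟨(pi_norm_le_iff_of_nonneg zero_le_one).2 fun i => ?_, ?_⟩
  · simp only [cylinderChart, Real.norm_eq_abs, abs_div, abs_of_pos hη]
    exact (div_le_one hη).2 (hx i i.2)
  · simp only [cylinderChart]
    exact abs_le.2 ⟨by linarith, by linarith⟩

theorem cylinderChartInv_mem (hη : 0 < η) {q : (G.free → ℝ) × ℝ}
    (hq : q ∈ closedBall 0 1) :
    G.cylinderChartInv η q ∈ G.toSet η ×ˢ Icc 0 1 := by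
  obtain ⟨hw, hτ⟩ := mem_closedBall_prod_iff.1 hq
  obtain ⟨hτ₁, hτ₂⟩ := abs_le.1 hτ
  refine ⟨⟨fun i hi => ?_, fun i hi => by simp [cylinderChartInv, hi]⟩, ?_, ?_⟩
  · have := (pi_norm_le_iff_of_nonneg zero_le_one).1 hw ⟨i, hi⟩
    simp only [cylinderChartInv, PiLp.toLp_apply, dif_pos hi, add_sub_cancel_left, abs_mul,
      abs_of_pos hη]
    rw [Real.norm_eq_abs] at this
    nlinarith
  all_goals simp only [cylinderChartInv]; linarith

theorem cylinderChartInv_fst_mem_boundary_iff (hη : 0 < η) {q : (G.free → ℝ) × ℝ}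
    (hq : q ∈ closedBall 0 1) :
    (G.cylinderChartInv η q).1 ∈ G.boundary η ↔ ‖q.1‖ = 1 := by
  rw [pi_norm_eq_one_iff (mem_closedBall_prod_iff.1 hq).1]
  have hmem := (G.cylinderChartInv_mem hη hq).1
  simp only [boundary, mem_sep_iff, hmem, true_and]
  constructor
  · rintro ⟨i, hi, h⟩
    refine ⟨⟨i, hi⟩, ?_⟩
    simp only [cylinderChartInv, PiLp.toLp_apply, dif_pos hi, add_sub_cancel_left, abs_mul,
      abs_of_pos hη] at h
    exact (mul_eq_left₀ hη.ne').1 h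
  · rintro ⟨i, h⟩
    refine ⟨i, i.2, ?_⟩
    simp only [cylinderChartInv, PiLp.toLp_apply, dif_pos i.2, add_sub_cancel_left, abs_mul,
      abs_of_pos hη, h, mul_one]

theorem norm_cylinderChart_fst_eq_one_iff (hη : 0 < η) {p : Euc m × ℝ}
    (hp : p ∈ G.toSet η ×ˢ Icc 0 1) :
    ‖(G.cylinderChart η p).1‖ = 1 ↔ p.1 ∈ G.boundary η := by
  rw [← G.cylinderChartInv_fst_mem_boundary_iff hη (G.cylinderChart_mem_closedBall hη hp),
    G.cylinderChartInv_cylinderChart hη.ne' hp.1]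

variable {Z : Type*} [TopologicalSpace Z] {N : Set Z}

theorem extensionProperty_cylinder_lid (hη : 0 < η) :
    ExtensionProperty (G.toSet η ×ˢ Icc (0 : ℝ) 1)
      (G.boundary η ×ˢ Icc 0 1 ∪ G.toSet η ×ˢ {1}) N := by
  have hsub : G.boundary η ×ˢ Icc 0 1 ∪ G.toSet η ×ˢ {1} ⊆
      G.toSet η ×ˢ Icc (0 : ℝ) 1 := by
    rintro p (⟨hx, ht⟩ | ⟨hx, ht⟩)
    exacts [⟨hx.1, ht⟩, ⟨hx, singleton_subset_iff.2 unitInterval.one_mem ht⟩]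
  refine (extensionProperty_closedBall_cylinderLid (E := G.free → ℝ)).of_chart
    (G.cylinderChart η) (G.cylinderChartInv η) G.continuous_cylinderChart.continuousOn
    (fun p hp => G.cylinderChart_mem_closedBall hη hp) ?_
    G.continuous_cylinderChartInv.continuousOn ?_
    (fun p hp => G.cylinderChartInv_cylinderChart hη.ne' (hsub hp).1)
  · intro p hp
    refine ⟨G.cylinderChart_mem_closedBall hη (hsub hp), ?_⟩
    rcases hp with ⟨hx, ht⟩ | ⟨-, ht⟩
    · exact Or.inl ((G.norm_cylinderChart_fst_eq_one_iff hη ⟨hx.1, ht⟩).2 hx)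
    · right
      simp only [cylinderChart, mem_singleton_iff.1 ht]
      norm_num
  · rintro q ⟨hq, h | h⟩
    · exact Or.inl ⟨(G.cylinderChartInv_fst_mem_boundary_iff hη hq).2 h,
        (G.cylinderChartInv_mem hη hq).2⟩
    · right
      refine ⟨(G.cylinderChartInv_mem hη hq).1, ?_⟩
      simp only [cylinderChartInv, h, mem_singleton_iff]
      norm_num

theorem extensionProperty_cylinder_boundary (hη : 0 < η) {ν : ℕ} {N : Set (Euc ν)}
    (hπ : PiTrivial G.free.card N) :
    ExtensionProperty (G.toSet η ×ˢ Icc (0 : ℝ) 1)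
      (G.boundary η ×ˢ Icc 0 1 ∪ G.toSet η ×ˢ {1} ∪ G.toSet η ×ˢ {0}) N := by
  have hsub : G.boundary η ×ˢ Icc 0 1 ∪ G.toSet η ×ˢ {1} ∪ G.toSet η ×ˢ {0} ⊆
      G.toSet η ×ˢ Icc (0 : ℝ) 1 := by
    rintro p ((⟨hx, ht⟩ | ⟨hx, ht⟩) | ⟨hx, ht⟩)
    exacts [⟨hx.1, ht⟩, ⟨hx, singleton_subset_iff.2 unitInterval.one_mem ht⟩,
      ⟨hx, singleton_subset_iff.2 unitInterval.zero_mem ht⟩]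
  have hrank : Module.finrank ℝ ((G.free → ℝ) × ℝ) = G.free.card + 1 := by
    rw [Module.finrank_prod, Module.finrank_fintype_fun_eq_card, Fintype.card_coe,
      Module.finrank_self]
  refine (hπ.extensionProperty hrank).of_chart (G.cylinderChart η)
    (G.cylinderChartInv η) G.continuous_cylinderChart.continuousOn
    (fun p hp => G.cylinderChart_mem_closedBall hη hp) ?_
    G.continuous_cylinderChartInv.continuousOn ?_
    (fun p hp => G.cylinderChartInv_cylinderChart hη.ne' (hsub hp).1)
  · intro p hp
    have hball := G.cylinderChart_mem_closedBall hη (hsub hp)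
    rw [mem_sphere_prod_iff hball]
    rcases hp with (⟨hx, ht⟩ | ⟨-, ht⟩) | ⟨-, ht⟩
    · exact Or.inl ((G.norm_cylinderChart_fst_eq_one_iff hη ⟨hx.1, ht⟩).2 hx)
    all_goals
      right
      simp only [cylinderChart, mem_singleton_iff.1 ht]
      norm_num
  · intro q hq
    have hball := sphere_subset_closedBall hq
    have hmem := G.cylinderChartInv_mem hη hball
    rcases (mem_sphere_prod_iff hball).1 hq with h | h
    · exact Or.inl
        (Or.inl ⟨(G.cylinderChartInv_fst_mem_boundary_iff hη hball).2 h, hmem.2⟩)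
    rcases abs_eq zero_le_one |>.1 h with h | h
    · refine Or.inl (Or.inr ⟨hmem.1, ?_⟩)
      simp only [cylinderChartInv, h, mem_singleton_iff]
      norm_num
    · refine Or.inr ⟨hmem.1, ?_⟩
      simp only [cylinderChartInv, h, mem_singleton_iff]
      norm_num

end GridFace

/-- `s` is a vertex coordinate of the cubication whose cube centers have coordinates in
`s₀ + 2ηℤ`. -/
def IsVertexLevel (η s₀ s : ℝ) : Prop := ∃ z : ℤ, s = s₀ + η + 2 * η * z

theorem isVertexLevel_iff_abs_sub_eq {η s₀ s : ℝ} (hη : 0 < η) (z : ℤ)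
    (h : |s - (s₀ + 2 * η * z)| ≤ η) :
    IsVertexLevel η s₀ s ↔ |s - (s₀ + 2 * η * z)| = η := by
  constructor
  · rintro ⟨w, rfl⟩
    refine le_antisymm h ?_
    rcases le_or_gt z w with hzw | hzw
    · have : (z : ℝ) ≤ w := by exact_mod_cast hzw
      exact le_abs.2 (Or.inl (by nlinarith))
    · have : (w : ℝ) + 1 ≤ z := by exact_mod_cast hzw
      exact le_abs.2 (Or.inr (by nlinarith))
  · intro h
    rcases abs_eq hη.le |>.1 h with h | h
    · exact ⟨z, by linarith⟩
    · exact ⟨z - 1, by push_cast; linarith⟩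

theorem eq_of_abs_sub_lt {η s₀ s : ℝ} (hη : 0 < η) {z z' : ℤ}
    (hz : |s - (s₀ + 2 * η * z)| < η) (hz' : |s - (s₀ + 2 * η * z')| < η) : z = z' := by
  have h : 2 * η * |((z - z' : ℤ) : ℝ)| < 2 * η * 1 := by
    calc 2 * η * |((z - z' : ℤ) : ℝ)| = |2 * η * ((z - z' : ℤ) : ℝ)| := by
          rw [abs_mul, abs_of_pos (by positivity : (0 : ℝ) < 2 * η)]
      _ = |(s - (s₀ + 2 * η * z')) - (s - (s₀ + 2 * η * z))| := by
          congr 1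
          push_cast
          ring
      _ ≤ |s - (s₀ + 2 * η * z')| + |s - (s₀ + 2 * η * z)| := abs_sub _ _
      _ < 2 * η * 1 := by linarith
  have h' : |z - z'| < 1 := by
    exact_mod_cast lt_of_mul_lt_mul_left h (by positivity)
  linarith [Int.abs_lt_one_iff.1 h']

section

variable {m : ℕ}

open Classical in
/-- `x` lies in the relative interior of a face of dimension `(freeCoords η c x).card`. -/
def freeCoords (η : ℝ) (c x : Euc m) : Finset (Fin m) :=
  Finset.univ.filter fun i => ¬ IsVertexLevel η (c i) (x i)

/-- The `(e - 1)`-skeleton of the cubication (empty for `e = 0`). -/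
def skelBelow (η : ℝ) (c : Euc m) (K : Set (GridFace m)) (e : ℕ) : Set (Euc m) :=
  {x ∈ skelUnion η K | (freeCoords η c x).card < e}

variable {η : ℝ} {c : Euc m} {K : Set (GridFace m)}

theorem mem_freeCoords {x : Euc m} {i : Fin m} :
    i ∈ freeCoords η c x ↔ ¬ IsVertexLevel η (c i) (x i) := by
  classical simp [freeCoords]

theorem mem_skelUnion {S : Set (GridFace m)} {x : Euc m} :
    x ∈ skelUnion η S ↔ ∃ F ∈ S, x ∈ F.toSet η := by
  simp [skelUnion]

theorem skelBelow_mono {d e : ℕ} (h : d ≤ e) : skelBelow η c K d ⊆ skelBelow η c K e :=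
  fun _ hx => ⟨hx.1, hx.2.trans_le h⟩

theorem skelBelow_eq_skelUnion {e : ℕ} (h : m < e) : skelBelow η c K e = skelUnion η K :=
  subset_antisymm (fun _ hx => hx.1) fun x hx =>
    ⟨hx, (Finset.card_le_univ _).trans_lt (by rwa [Fintype.card_fin])⟩

namespace IsSubskeleton

variable (hK : IsSubskeleton c η m K)
include hK

theorem free_eq_univ {F : GridFace m} (hF : F ∈ K) : F.free = Finset.univ :=
  Finset.eq_univ_of_card _ (by rw [Fintype.card_fin]; exact (hK F hF).2)

theorem exists_cube_center_eq {F : GridFace m} (hF : F ∈ K) (i : Fin m) :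
    ∃ z : ℤ, F.center i = c i + 2 * η * z :=
  (hK F hF).1.1 i (by simp [hK.free_eq_univ hF])

variable {e : ℕ} {G G' : GridFace m} {x : Euc m}

theorem exists_center_eq_of_mem_free (hG : G ∈ skelFaces η K e) {i : Fin m} (hi : i ∈ G.free) :
    ∃ z : ℤ, G.center i = c i + 2 * η * z := by
  obtain ⟨-, F, hF, hGF⟩ := hG
  obtain ⟨z, hz⟩ := hK.exists_cube_center_eq hF i
  exact ⟨z, (hGF.2.1 i hi).trans hz⟩

theorem isVertexLevel_center_of_notMem_free (hG : G ∈ skelFaces η K e) {i : Fin m}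
    (hi : i ∉ G.free) :
    IsVertexLevel η (c i) (G.center i) := by
  obtain ⟨-, F, hF, hGF⟩ := hG
  obtain ⟨z, hz⟩ := hK.exists_cube_center_eq hF i
  rcases hGF.2.2.2 i (by simp [hK.free_eq_univ hF]) hi with h | h
  · exact ⟨z - 1, by rw [h, hz]; push_cast; ring⟩
  · exact ⟨z, by rw [h, hz]; ring⟩

theorem toSet_subset_skelUnion (hη : 0 ≤ η) (hG : G ∈ skelFaces η K e) :
    G.toSet η ⊆ skelUnion η K := by
  obtain ⟨-, F, hF, hGF⟩ := hG
  refine fun x hx => mem_skelUnion.2 ⟨F, hF, fun i _ => ?_, fun i hi => by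
    simp [hK.free_eq_univ hF] at hi⟩
  by_cases hi : i ∈ G.free
  · rw [← hGF.2.1 i hi]
    exact hx.1 i hi
  · rcases hGF.2.2.2 i (by simp [hK.free_eq_univ hF]) hi with h | h <;>
      simp [hx.2 i hi, h, abs_of_nonneg hη]

theorem freeCoords_subset_free (hG : G ∈ skelFaces η K e) (hx : x ∈ G.toSet η) :
    freeCoords η c x ⊆ G.free := fun i hi => by
  by_contra hiG
  exact mem_freeCoords.1 hi (hx.2 i hiG ▸ hK.isVertexLevel_center_of_notMem_free hG hiG)

theorem toSet_subset_skelBelow_succ (hη : 0 ≤ η) (hG : G ∈ skelFaces η K e) :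
    G.toSet η ⊆ skelBelow η c K (e + 1) := fun _ hx =>
  ⟨hK.toSet_subset_skelUnion hη hG hx,
    Nat.lt_succ_of_le (hG.1 ▸ Finset.card_le_card (hK.freeCoords_subset_free hG hx))⟩

theorem mem_boundary_iff_card_freeCoords_lt (hη : 0 < η) (hG : G ∈ skelFaces η K e)
    (hx : x ∈ G.toSet η) :
    x ∈ G.boundary η ↔ (freeCoords η c x).card < e := by
  have hvertex : ∀ i ∈ G.free, (IsVertexLevel η (c i) (x i) ↔ |x i - G.center i| = η) :=
    fun i hi => by
      obtain ⟨z, hz⟩ := hK.exists_center_eq_of_mem_free hG hi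
      rw [hz]
      exact isVertexLevel_iff_abs_sub_eq hη z (hz ▸ hx.1 i hi)
  constructor
  · rintro ⟨-, i, hi, hxi⟩
    have hsub : freeCoords η c x ⊆ G.free.erase i := fun j hj =>
      Finset.mem_erase.2 ⟨fun hji => mem_freeCoords.1 hj (hji ▸ (hvertex i hi).2 hxi),
        hK.freeCoords_subset_free hG hx hj⟩
    calc (freeCoords η c x).card ≤ (G.free.erase i).card := Finset.card_le_card hsub
      _ < G.free.card := Finset.card_erase_lt_of_mem hi
      _ = e := hG.1
  · intro hcard
    obtain ⟨i, hi, hix⟩ := Finset.exists_mem_notMem_of_card_lt_card (hG.1 ▸ hcard)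
    exact ⟨hx, i, hi, (hvertex i hi).1 (not_not.1 (mt mem_freeCoords.2 hix))⟩

theorem mem_skelBelow_iff_mem_boundary (hη : 0 < η) (hG : G ∈ skelFaces η K e)
    (hx : x ∈ G.toSet η) : x ∈ skelBelow η c K e ↔ x ∈ G.boundary η := by
  rw [hK.mem_boundary_iff_card_freeCoords_lt hη hG hx, skelBelow, mem_sep_iff,
    and_iff_right (hK.toSet_subset_skelUnion hη.le hG hx)]

theorem exists_mem_skelFaces (hη : 0 < η) (he : e ≤ m) (hx : x ∈ skelUnion η K)
    (hcard : (freeCoords η c x).card ≤ e) : ∃ G ∈ skelFaces η K e, x ∈ G.toSet η := by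
  classical
  obtain ⟨F, hF, hxF⟩ := mem_skelUnion.1 hx
  have hFi : ∀ i, i ∈ F.free := by simp [hK.free_eq_univ hF]
  obtain ⟨S, hxS, hS⟩ := Finset.exists_superset_card_eq hcard (by rwa [Fintype.card_fin])
  refine ⟨⟨S, WithLp.toLp 2 fun i => if i ∈ S then F.center i else x i⟩,
    ⟨hS, F, hF, fun i _ => hFi i, fun i hi => by simp [hi], fun i hi => (hi (hFi i)).elim,
      fun i _ hi => ?_⟩, fun i hi => by simpa [hi] using hxF.1 i (hFi i),
      fun i hi => by simp [hi]⟩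
  obtain ⟨z, hz⟩ := hK.exists_cube_center_eq hF i
  have hxi : |x i - F.center i| ≤ η := hxF.1 i (hFi i)
  have hv : IsVertexLevel η (c i) (x i) := not_not.1 fun h => hi (hxS (mem_freeCoords.2 h))
  rw [hz] at hxi ⊢
  have := (isVertexLevel_iff_abs_sub_eq hη z hxi).1 hv
  simp only [hi, if_false]
  rcases abs_eq hη.le |>.1 this with h | h
  · right; linarith
  · left; linarith

theorem skelBelow_succ_eq (hη : 0 < η) (he : e ≤ m) :
    skelBelow η c K (e + 1) = skelUnion η (skelFaces η K e) := by
  refine subset_antisymm (fun x hx => ?_) fun x hx => ?_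
  · obtain ⟨G, hG, hxG⟩ := hK.exists_mem_skelFaces hη he hx.1 (Nat.lt_succ_iff.1 hx.2)
    exact mem_skelUnion.2 ⟨G, hG, hxG⟩
  · obtain ⟨G, hG, hxG⟩ := mem_skelUnion.1 hx
    exact hK.toSet_subset_skelBelow_succ hη.le hG hxG

theorem mem_skelBelow_of_ne (hη : 0 < η) (hG : G ∈ skelFaces η K e)
    (hG' : G' ∈ skelFaces η K e) (hne : G ≠ G') (hx : x ∈ G.toSet η)
    (hx' : x ∈ G'.toSet η) :
    x ∈ skelBelow η c K e := by
  by_contra hlow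
  have hint : ∀ {H : GridFace m}, H ∈ skelFaces η K e → x ∈ H.toSet η →
      H.free = freeCoords η c x ∧ ∀ i ∈ H.free, |x i - H.center i| < η := by
    intro H hH hxH
    have hbd := mt (hK.mem_skelBelow_iff_mem_boundary hη hH hxH).2 hlow
    have hcard := not_lt.1 (mt (hK.mem_boundary_iff_card_freeCoords_lt hη hH hxH).2 hbd)
    refine ⟨(Finset.eq_of_subset_of_card_le (hK.freeCoords_subset_free hH hxH)
      (hH.1 ▸ hcard)).symm, fun i hi => ?_⟩
    exact lt_of_le_of_ne (hxH.1 i hi) fun h => hbd ⟨hxH, i, hi, h⟩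
  obtain ⟨hfree, hlt⟩ := hint hG hx
  obtain ⟨hfree', hlt'⟩ := hint hG' hx'
  obtain ⟨S, g⟩ := G
  obtain ⟨S', g'⟩ := G'
  simp only at hfree hfree' hlt hlt'
  subst hfree hfree'
  refine hne (congrArg _ (PiLp.ext fun i => ?_))
  by_cases hi : i ∈ freeCoords η c x
  · obtain ⟨z, hz⟩ := hK.exists_center_eq_of_mem_free hG hi
    obtain ⟨z', hz'⟩ := hK.exists_center_eq_of_mem_free hG' hi
    have h := hlt i hi
    have h' := hlt' i hi
    simp only at hz hz' h h'
    rw [hz] at h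
    rw [hz'] at h'
    rw [hz, hz', eq_of_abs_sub_lt hη h h']
  · exact (hx.2 i hi).symm.trans (hx'.2 i hi)

theorem exists_center_eq_add_mul (hG : G ∈ skelFaces η K e)
    (i : Fin m) : ∃ w : ℤ, G.center i = c i + η * w := by
  by_cases hi : i ∈ G.free
  · obtain ⟨z, hz⟩ := hK.exists_center_eq_of_mem_free hG hi
    exact ⟨2 * z, by rw [hz]; push_cast; ring⟩
  · obtain ⟨z, hz⟩ := hK.isVertexLevel_center_of_notMem_free hG hi
    exact ⟨2 * z + 1, by rw [hz]; push_cast; ring⟩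

/-- Face centers are lattice points of the bounded cube, hence finitely many. -/
theorem finite_skelFaces (hη : 0 < η) {a : Euc m} {r : ℝ} (hX : skelUnion η K = cubeC a r)
    (e : ℕ) : (skelFaces η K e).Finite := by
  let T : Fin m → Set ℝ := fun i => (fun w : ℤ => c i + η * w) ''
    Icc ⌈(a i - r - c i) / η⌉ ⌊(a i + r - c i) / η⌋
  have hV : (WithLp.toLp 2 '' univ.pi T : Set (Euc m)).Finite :=
    (Finite.pi fun i => (finite_Icc _ _).image _).image _
  refine ((finite_univ (α := Finset (Fin m))).prod hV).image
    (fun p => (⟨p.1, p.2⟩ : GridFace m)) |>.subset fun G hG => ⟨(G.free, G.center),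
      ⟨mem_univ _, G.center.ofLp, fun i _ => ?_, rfl⟩, rfl⟩
  obtain ⟨w, hw⟩ := hK.exists_center_eq_add_mul hG i
  have hGX := hX ▸ hK.toSet_subset_skelUnion hη.le hG (G.center_mem_toSet hη.le)
  obtain ⟨h₁, h₂⟩ := abs_le.1 (hGX i)
  refine ⟨w, ⟨Int.ceil_le.2 ?_, Int.le_floor.2 ?_⟩, hw.symm⟩ <;>
    [rw [div_le_iff₀ hη]; rw [le_div_iff₀ hη]] <;> linarith

theorem isClosed_skelBelow (hη : 0 < η) {a : Euc m} {r : ℝ} (hX : skelUnion η K = cubeC a r)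
    (he : e ≤ m + 1) : IsClosed (skelBelow η c K e) := by
  cases e with
  | zero => simp [skelBelow]
  | succ d =>
    rw [hK.skelBelow_succ_eq hη (by omega)]
    exact (hK.finite_skelFaces hη hX d).isClosed_biUnion fun G _ => G.isClosed_toSet η

theorem nonempty_skelBelow_one (hη : 0 ≤ η) (hKne : K.Nonempty) :
    (skelBelow η c K 1).Nonempty := by
  obtain ⟨F, hF⟩ := hKne
  refine ⟨WithLp.toLp 2 fun i => F.center i + η, mem_skelUnion.2 ⟨F, hF, fun i _ => ?_,
    fun i hi => by simp [hK.free_eq_univ hF] at hi⟩, ?_⟩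
  · simp [abs_of_nonneg hη]
  · rw [Nat.lt_one_iff, Finset.card_eq_zero, Finset.eq_empty_iff_forall_notMem]
    intro i hi
    obtain ⟨z, hz⟩ := hK.exists_cube_center_eq hF i
    exact mem_freeCoords.1 hi ⟨z, by simp only [hz]; ring⟩

end IsSubskeleton

end

section

variable {m : ℕ}

/-- Moves the coordinates of `x` to those of `v` one after the other, the `i`-th one during
the time interval `[i / m, (i + 1) / m]`. -/
def sweep (v x : Euc m) (t : ℝ) : Euc m :=
  WithLp.toLp 2 fun i => x i + (projIcc 0 1 zero_le_one (t * m - i) : ℝ) * (v i - x i)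

theorem continuous_sweep (v : Euc m) : Continuous fun p : Euc m × ℝ => sweep v p.1 p.2 := by
  refine (PiLp.continuous_toLp 2 _).comp (continuous_pi fun i => ?_)
  have hx : Continuous fun p : Euc m × ℝ => p.1 i :=
    (PiLp.continuous_apply 2 (fun _ : Fin m => ℝ) i).comp continuous_fst
  exact hx.add ((continuous_subtype_val.comp (continuous_projIcc.comp
    ((continuous_snd.mul continuous_const).sub continuous_const))).mul (continuous_const.sub hx))

theorem sweep_zero (v x : Euc m) : sweep v x 0 = x := by
  ext i
  simp [sweep, projIcc_of_le_left]

theorem sweep_one (v x : Euc m) : sweep v x 1 = v := by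
  ext i
  have : (i : ℝ) + 1 ≤ m := by exact_mod_cast i.2
  simp [sweep, projIcc_of_right_le _ (show (1 : ℝ) ≤ m - i by linarith)]

theorem sweep_mem_cubeC {a v x : Euc m} {r : ℝ} (hv : v ∈ cubeC a r) (hx : x ∈ cubeC a r)
    (t : ℝ) : sweep v x t ∈ cubeC a r := by
  intro i
  obtain ⟨hv₁, hv₂⟩ := abs_le.1 (hv i)
  obtain ⟨hx₁, hx₂⟩ := abs_le.1 (hx i)
  simp only [sweep, PiLp.toLp_apply]
  obtain ⟨h₀, h₁⟩ := (projIcc 0 1 zero_le_one (t * m - i)).2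
  exact abs_le.2 ⟨by nlinarith, by nlinarith⟩

theorem sweep_apply_eq_or (v x : Euc m) {t : ℝ} {i : Fin m} (hi : (i : ℕ) ≠ ⌊t * m⌋₊) :
    sweep v x t i = x i ∨ sweep v x t i = v i := by
  simp only [sweep, PiLp.toLp_apply]
  rcases le_or_gt (t * m - i) 0 with h | h
  · left
    simp [projIcc_of_le_left _ h]
  rcases le_or_gt 1 (t * m - i) with h' | h'
  · right
    simp [projIcc_of_right_le _ h']
  · exact (hi ((Nat.floor_eq_iff (by linarith [Nat.cast_nonneg (α := ℝ) i])).2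
      ⟨by linarith, by linarith⟩).symm).elim

variable {η : ℝ} {c : Euc m} {K : Set (GridFace m)} {a : Euc m} {r : ℝ}

theorem sweep_mem_skelBelow (hX : skelUnion η K = cubeC a r) {v x : Euc m}
    (hv : v ∈ skelBelow η c K 1) {e : ℕ} (hx : x ∈ skelBelow η c K e) (t : ℝ) :
    sweep v x t ∈ skelBelow η c K (e + 1) := by
  classical
  refine ⟨hX ▸ sweep_mem_cubeC (hX ▸ hv.1) (hX ▸ hx.1) t, ?_⟩
  have hv₀ := Finset.card_eq_zero.1 (Nat.lt_one_iff.1 hv.2)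
  have hvert : ∀ i, IsVertexLevel η (c i) (v i) := fun i =>
    not_not.1 fun h => by simpa [hv₀] using mem_freeCoords.2 h
  have hsub : freeCoords η c (sweep v x t) ⊆
      freeCoords η c x ∪ Finset.univ.filter fun i : Fin m => (i : ℕ) = ⌊t * m⌋₊ := by
    intro i hi
    by_cases hti : (i : ℕ) = ⌊t * m⌋₊
    · simp [hti]
    rcases sweep_apply_eq_or v x hti with h | h <;> rw [mem_freeCoords, h] at hi
    · exact Finset.mem_union_left _ (mem_freeCoords.2 hi)
    · exact (hi (hvert i)).elim
  have hone : (Finset.univ.filter fun i : Fin m => (i : ℕ) = ⌊t * m⌋₊).card ≤ 1 :=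
    Finset.card_le_one.2 fun i hi j hj => Fin.ext (by simp at hi hj; omega)
  calc (freeCoords η c (sweep v x t)).card
      ≤ (freeCoords η c x).card + 1 := (Finset.card_le_card hsub).trans
        ((Finset.card_union_le _ _).trans (Nat.add_le_add_left hone _))
    _ < e + 1 := Nat.add_lt_add_right hx.2 1

end

section

variable {m : ℕ} {η : ℝ} {c : Euc m} {K : Set (GridFace m)}

def skelCylinder (η : ℝ) (c : Euc m) (K : Set (GridFace m)) (e : ℕ) : Set (Euc m × ℝ) :=
  skelBelow η c K e ×ˢ Icc 0 1 ∪ skelUnion η K ×ˢ {1}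

theorem skelCylinder_mono {d e : ℕ} (h : d ≤ e) :
    skelCylinder η c K d ⊆ skelCylinder η c K e :=
  union_subset_union_left _ (prod_mono (skelBelow_mono h) subset_rfl)

theorem mapsTo_sweep {a : Euc m} {r : ℝ} (hX : skelUnion η K = cubeC a r) {v : Euc m}
    (hv : v ∈ skelBelow η c K 1) (e : ℕ) :
    MapsTo (fun p : Euc m × ℝ => sweep v p.1 p.2)
      (skelCylinder η c K e ∪ skelBelow η c K (e + 1) ×ˢ {0}) (skelBelow η c K (e + 1)) := by
  rintro ⟨x, t⟩ ((⟨hx, -⟩ | ⟨-, ht⟩) | ⟨hx, ht⟩)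
  · exact sweep_mem_skelBelow hX hv hx t
  · obtain rfl : t = 1 := ht
    simpa only [sweep_one] using skelBelow_mono (Nat.le_add_left 1 e) hv
  · obtain rfl : t = 0 := ht
    simpa only [sweep_zero] using hx

namespace IsSubskeleton

variable (hK : IsSubskeleton c η m K) (hη : 0 < η) {a : Euc m} {r : ℝ}
  {Z : Type*} [TopologicalSpace Z] {N : Set Z}
include hK hη

theorem isClosed_skelCylinder {e : ℕ}
    (hX : skelUnion η K = cubeC a r) (he : e ≤ m + 1) : IsClosed (skelCylinder η c K e) := by
  have hXc : IsClosed (skelUnion η K) := by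
    rw [← skelBelow_eq_skelUnion (c := c) (Nat.lt_succ_self m)]
    exact hK.isClosed_skelBelow hη hX le_rfl
  exact ((hK.isClosed_skelBelow hη hX he).prod isClosed_Icc).union (hXc.prod isClosed_singleton)

theorem extensionProperty_skelCylinder_succ {e : ℕ}
    (hX : skelUnion η K = cubeC a r) (he : e ≤ m) {B : Set (Euc m × ℝ)}
    (hB : IsClosed B) (hlow : skelCylinder η c K e ⊆ B)
    (hhigh : B ⊆ skelCylinder η c K (e + 1))
    (hcell : ∀ G ∈ skelFaces η K e,
      ExtensionProperty (G.toSet η ×ˢ Icc (0 : ℝ) 1) (G.toSet η ×ˢ Icc 0 1 ∩ B) N) :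
    ExtensionProperty (skelCylinder η c K (e + 1)) B N := by
  have : Finite (skelFaces η K e) := (hK.finite_skelFaces hη hX e).to_subtype
  have hunion : B ∪ ⋃ G : skelFaces η K e, G.1.toSet η ×ˢ Icc (0 : ℝ) 1 =
      skelCylinder η c K (e + 1) := by
    refine subset_antisymm (union_subset hhigh (iUnion_subset fun G p hp =>
      Or.inl ⟨hK.toSet_subset_skelBelow_succ hη.le G.2 hp.1, hp.2⟩)) ?_
    rintro p (⟨hx, ht⟩ | hp)
    · obtain ⟨G, hG, hxG⟩ := hK.exists_mem_skelFaces hη he hx.1 (Nat.lt_succ_iff.1 hx.2)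
      exact Or.inr (mem_iUnion.2 ⟨⟨G, hG⟩, hxG, ht⟩)
    · exact Or.inl (hlow (Or.inr hp))
  rw [← hunion]
  refine ExtensionProperty.iUnion hB (fun G => (G.1.isClosed_toSet η).prod isClosed_Icc)
    (fun G G' hne p ⟨⟨hx, ht⟩, hx', _⟩ => hlow (Or.inl ⟨?_, ht⟩)) fun G => hcell G G.2
  exact hK.mem_skelBelow_of_ne hη G.2 G'.2 (Subtype.coe_injective.ne hne) hx hx'

theorem prod_Icc_inter_skelCylinder {e : ℕ} {G : GridFace m} (hG : G ∈ skelFaces η K e) :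
    G.toSet η ×ˢ Icc (0 : ℝ) 1 ∩ skelCylinder η c K e =
      G.boundary η ×ˢ Icc 0 1 ∪ G.toSet η ×ˢ {1} := by
  ext ⟨x, t⟩
  constructor
  · rintro ⟨⟨hx, ht⟩, ⟨hlow, -⟩ | ⟨-, h1⟩⟩
    exacts [Or.inl ⟨(hK.mem_skelBelow_iff_mem_boundary hη hG hx).1 hlow, ht⟩,
      Or.inr ⟨hx, h1⟩]
  · rintro (⟨hb, ht⟩ | ⟨hx, h1⟩)
    · exact ⟨⟨hb.1, ht⟩,
        Or.inl ⟨(hK.mem_skelBelow_iff_mem_boundary hη hG hb.1).2 hb, ht⟩⟩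
    · exact ⟨⟨hx, singleton_subset_iff.2 unitInterval.one_mem h1⟩,
        Or.inr ⟨hK.toSet_subset_skelUnion hη.le hG hx, h1⟩⟩

/-- Homotopy extension: the cylinder over an `e`-face retracts onto its lateral boundary and
its top. -/
theorem extensionProperty_skelCylinder_succ_skelCylinder {e : ℕ}
    (hX : skelUnion η K = cubeC a r) (he : e ≤ m) :
    ExtensionProperty (skelCylinder η c K (e + 1)) (skelCylinder η c K e) N :=
  hK.extensionProperty_skelCylinder_succ hη hX he (hK.isClosed_skelCylinder hη hX (by omega))
    subset_rfl (skelCylinder_mono (Nat.le_succ e)) fun G hG => by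
      rw [hK.prod_Icc_inter_skelCylinder hη hG]
      exact G.extensionProperty_cylinder_lid hη

/-- The boundary of the cylinder over an `ℓ`-face is an `ℓ`-sphere. -/
theorem extensionProperty_skelCylinder_succ_of_piTrivial {ℓ ν : ℕ} {N : Set (Euc ν)}
    (hX : skelUnion η K = cubeC a r) (hℓ : ℓ ≤ m) (hπ : PiTrivial ℓ N) :
    ExtensionProperty (skelCylinder η c K (ℓ + 1))
      (skelCylinder η c K ℓ ∪ skelBelow η c K (ℓ + 1) ×ˢ {0}) N := by
  refine hK.extensionProperty_skelCylinder_succ hη hX hℓ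
    ((hK.isClosed_skelCylinder hη hX (by omega)).union
      ((hK.isClosed_skelBelow hη hX (by omega)).prod isClosed_singleton))
    subset_union_left (union_subset (skelCylinder_mono (Nat.le_succ ℓ))
      fun p ⟨hx, ht⟩ => Or.inl ⟨hx, singleton_subset_iff.2 unitInterval.zero_mem ht⟩)
    fun G hG => ?_
  have hbottom : G.toSet η ×ˢ Icc (0 : ℝ) 1 ∩ skelBelow η c K (ℓ + 1) ×ˢ {0} =
      G.toSet η ×ˢ {0} := by
    refine subset_antisymm (fun p ⟨⟨hx, _⟩, _, ht⟩ => ⟨hx, ht⟩) fun p ⟨hx, ht⟩ =>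
      ⟨⟨hx, singleton_subset_iff.2 unitInterval.zero_mem ht⟩,
        hK.toSet_subset_skelBelow_succ hη.le hG hx, ht⟩
  rw [inter_union_distrib_left, hK.prod_Icc_inter_skelCylinder hη hG, hbottom]
  exact G.extensionProperty_cylinder_boundary hη (hG.1 ▸ hπ)

theorem extensionProperty_skelUnion_prod {ℓ ν : ℕ} {N : Set (Euc ν)}
    (hX : skelUnion η K = cubeC a r) (hℓ : ℓ ≤ m)
    (hπ : PiTrivial ℓ N) :
    ExtensionProperty (skelUnion η K ×ˢ Icc (0 : ℝ) 1)
      (skelCylinder η c K ℓ ∪ skelBelow η c K (ℓ + 1) ×ˢ {0}) N := by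
  have hstep : ∀ k, ℓ + k ≤ m → ExtensionProperty (skelCylinder η c K (ℓ + k + 1))
      (skelCylinder η c K ℓ ∪ skelBelow η c K (ℓ + 1) ×ˢ {0}) N := by
    intro k
    induction k with
    | zero => exact fun _ => hK.extensionProperty_skelCylinder_succ_of_piTrivial hη hX hℓ hπ
    | succ k ih =>
      intro hk
      refine (hK.extensionProperty_skelCylinder_succ_skelCylinder hη hX (by omega)).trans
        (ih (by omega)) (union_subset (skelCylinder_mono (by omega)) fun p ⟨hx, ht⟩ => Or.inl
          ⟨skelBelow_mono (by omega) hx, singleton_subset_iff.2 unitInterval.zero_mem ht⟩)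
  have htop : skelCylinder η c K (ℓ + (m - ℓ) + 1) = skelUnion η K ×ˢ Icc (0 : ℝ) 1 := by
    rw [skelCylinder, show ℓ + (m - ℓ) + 1 = m + 1 by omega,
      skelBelow_eq_skelUnion (Nat.lt_succ_self m), union_eq_left]
    exact prod_mono subset_rfl (singleton_subset_iff.2 unitInterval.one_mem)
  exact htop ▸ hstep (m - ℓ) (by omega)

end IsSubskeleton

end

theorem continuous_extension_property_general
    (m ν ℓ : ℕ) (hℓ : ℓ ≤ m - 1)
    (η : ℝ) (hη : 0 < η) (c : Euc m) (K : Set (GridFace m)) (hK : IsSubskeleton c η m K)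
    (hKcube : ∃ (a : Euc m) (r : ℝ), skelUnion η K = cubeC a r)
    (N : Set (Euc ν))
    (hπ : PiTrivial ℓ N)
    (u : Euc m → Euc ν)
    (hu : ContinuousOn u (skelUnion η (skelFaces η K ℓ)))
    (hu' : MapsTo u (skelUnion η (skelFaces η K ℓ)) N) :
    ∃ f : Euc m → Euc ν,
      ContinuousOn f (skelUnion η K) ∧
      MapsTo f (skelUnion η K) N ∧
      EqOn f u (skelUnion η (skelFaces η K ℓ)) := by
  rcases K.eq_empty_or_nonempty with rfl | hKne
  · have hempty : skelUnion η (∅ : Set (GridFace m)) = ∅ := by simp [skelUnion]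
    rw [hempty]
    exact ⟨u, continuousOn_empty u, mapsTo_empty u N, eqOn_refl u _⟩
  obtain ⟨a, r, hX⟩ := hKcube
  have hℓm : ℓ ≤ m := hℓ.trans (Nat.sub_le m 1)
  obtain ⟨v, hv⟩ := hK.nonempty_skelBelow_one hη.le hKne
  rw [← hK.skelBelow_succ_eq hη hℓm] at hu hu' ⊢
  obtain ⟨F, hFc, hFN, hFu⟩ := hK.extensionProperty_skelUnion_prod hη hX hℓm hπ _
    (hu.comp (continuous_sweep v).continuousOn (mapsTo_sweep hX hv ℓ))
    (hu'.comp (mapsTo_sweep hX hv ℓ))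
  have hbottom : MapsTo (fun x => (x, (0 : ℝ))) (skelUnion η K) (skelUnion η K ×ˢ Icc 0 1) :=
    fun x hx => ⟨hx, unitInterval.zero_mem⟩
  refine ⟨fun x => F (x, 0), hFc.comp (by fun_prop) hbottom, hFN.comp hbottom, fun x hx => ?_⟩
  simpa [sweep_zero] using hFu (show (x, (0 : ℝ)) ∈ _ from Or.inr ⟨hx, rfl⟩)

/-- continuous extension property: let `K^m` be a cubication of radius `η`
whose underlying set is a cube. If `π_ℓ(N)` is trivial, then every continuous map
`u : K^ℓ → N` on the `ℓ`-dimensional skeleton has a continuous extension `f : K^m → N`. -/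
theorem continuous_extension_property
    (m n ν ℓ : ℕ) (hm : 1 ≤ m) (hℓ : ℓ ≤ m - 1)
    (η : ℝ) (hη : 0 < η) (c : Euc m) (K : Set (GridFace m)) (hK : IsSubskeleton c η m K)
    (hKcube : ∃ (a : Euc m) (r : ℝ), skelUnion η K = cubeC a r)
    (N : Set (Euc ν)) (hNne : N.Nonempty) (hNcpt : IsCompact N)
    (hNman : IsSmoothSubmanifold n N)
    (hπ : PiTrivial ℓ N)
    (u : Euc m → Euc ν)
    (hu : ContinuousOn u (skelUnion η (skelFaces η K ℓ)))
    (hu' : MapsTo u (skelUnion η (skelFaces η K ℓ)) N) :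
    ∃ f : Euc m → Euc ν,
      ContinuousOn f (skelUnion η K) ∧
      MapsTo f (skelUnion η K) N ∧
      EqOn f u (skelUnion η (skelFaces η K ℓ)) :=
  continuous_extension_property_general m ν ℓ hℓ η hη c K hK hKcube N hπ u hu hu'
end
end
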